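/- arXiv:1307.6623 — 12 statements merged into one kernel-verified Lean document; each statement's English description precedes it below -/
import Mathlib

section
/- Let p, q be idempotents in a ring R and suppose p − q is Drazin invertible with Drazin inverse (p−q)^D. Then F := p(p−q)^D is an idempotent and F = (p−q)^D(1−q). -/
/-- `b` is the Drazin inverse of `a`. -/
def IsDrazinInverse {R : Type*} [Ring R] (a b : R) : Prop :=
  a * b = b * a ∧ b * a * b = b ∧ IsNilpotent (a - a * a * b)

section Aux

variable {R : Type*} [Ring R]

/-- If `x * a = a * y` and `y * a = a * x`, then `x` commutes with even powers of `a`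
and intertwines with `y` across odd powers. -/
lemma pow_intertwine {a x y : R} (hx : x * a = a * y) (hy : y * a = a * x) :
    ∀ k : ℕ, x * a ^ (2 * k) = a ^ (2 * k) * x ∧ x * a ^ (2 * k + 1) = a ^ (2 * k + 1) * y := by
  intro k
  induction k with
  | zero => simp [pow_one, hx]
  | succ n ih =>
    obtain ⟨ihe, iho⟩ := ih
    have e1 : 2 * (n + 1) = 2 * n + 1 + 1 := by ring
    have e2 : 2 * (n + 1) + 1 = 2 * n + 1 + 1 + 1 := by ring
    have he : x * a ^ (2 * n + 1 + 1) = a ^ (2 * n + 1 + 1) * x := by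
      rw [pow_succ, ← mul_assoc, iho, mul_assoc, hy, ← mul_assoc]
    constructor
    · rw [e1]; exact he
    · rw [e2, pow_succ, ← mul_assoc, he, mul_assoc, hx, ← mul_assoc]

/-- Key lemma: the Drazin inverse lies in the "double intertwiner": if
`x * a = a * y` and `y * a = a * x` then `x * d = d * y`. -/
lemma intertwine {a d x y : R} (hc : a * d = d * a) (hdd : d * a * d = d)
    (hn : IsNilpotent (a - a * a * d)) (hx : x * a = a * y) (hy : y * a = a * x) :
    x * d = d * y := by
  have hC : Commute a d := hc
  have had2 : a * (d * d) = d := by rw [← mul_assoc, hc, hdd]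
  have hd2a : d * d * a = d := by
    rw [mul_assoc, ← hc, ← mul_assoc, hdd]
  -- (a - a*a*d)^(k+1) = a^(k+1) - a^(k+2) * d
  have key : ∀ k : ℕ, (a - a * a * d) ^ (k + 1) = a ^ (k + 1) - a ^ (k + 2) * d := by
    intro k
    induction k with
    | zero => simp [pow_one, pow_succ]
    | succ n ih =>
      rw [pow_succ, ih]
      have t2 : a ^ (n + 1) * (a * a * d) = a ^ (n + 3) * d := by
        rw [← mul_assoc, ← mul_assoc, ← pow_succ, ← pow_succ]
      have t3 : a ^ (n + 2) * d * a = a ^ (n + 3) * d := by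
        rw [mul_assoc, ← hc, ← mul_assoc, ← pow_succ]
      have t4 : a ^ (n + 2) * d * (a * a * d) = a ^ (n + 3) * d := by
        have h1 : d * (a * a * d) = a * d := by
          rw [mul_assoc a a d, ← mul_assoc d a, ← hc, mul_assoc a d, ← mul_assoc d a d, hdd]
        rw [mul_assoc, h1, ← mul_assoc, ← pow_succ]
      rw [sub_mul, mul_sub, mul_sub, t2, t3, t4, sub_self, sub_zero, ← pow_succ]
  obtain ⟨m, hm⟩ := hn
  -- a ^ K = a ^ (K+1) * d for K = 2*m+2 (even)
  have hzero : (a - a * a * d) ^ (2 * m + 2) = 0 := by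
    have : 2 * m + 2 = m + (m + 2) := by ring
    rw [this, pow_add, hm, zero_mul]
  have hK : a ^ (2 * m + 2) = a ^ (2 * m + 3) * d := by
    have := key (2 * m + 1)
    rw [hzero] at this
    have h2 : 2 * m + 1 + 1 = 2 * m + 2 := rfl
    have h3 : 2 * m + 1 + 2 = 2 * m + 3 := rfl
    rw [h2, h3] at this
    exact (sub_eq_zero.mp this.symm)
  -- d = d^(k+1) * a^k
  have hdk : ∀ k : ℕ, d ^ (k + 1) * a ^ k = d := by
    intro k
    induction k with
    | zero => simp
    | succ n ih =>
      calc d ^ (n + 1 + 1) * a ^ (n + 1)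
          = (d ^ (n + 1) * d) * (a ^ n * a) := by rw [pow_succ d, pow_succ a]
        _ = d ^ (n + 1) * ((d * a ^ n) * a) := by rw [mul_assoc, mul_assoc]
        _ = d ^ (n + 1) * ((a ^ n * d) * a) := by rw [← (hC.pow_left n).eq]
        _ = (d ^ (n + 1) * a ^ n) * (d * a) := by
            rw [mul_assoc (a ^ n), ← mul_assoc (d ^ (n + 1))]
        _ = d * (d * a) := by rw [ih]
        _ = d := by rw [← hc, ← mul_assoc, hdd]
  have hdK : d ^ (2 * m + 4) * a ^ (2 * m + 3) = d := hdk (2 * m + 3)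
  have hKd : a ^ (2 * m + 3) * d ^ (2 * m + 4) = d := by
    rw [← (hC.pow_pow (2 * m + 3) (2 * m + 4)).eq] at hdK
    exact hdK
  -- intertwining with powers
  have Hx := pow_intertwine hx hy
  have Hy := pow_intertwine hy hx
  have hax : a ^ (2 * m + 3) * x = y * a ^ (2 * m + 3) := by
    have := (Hy (m + 1)).2
    have e : 2 * (m + 1) + 1 = 2 * m + 3 := by ring
    rw [e] at this
    exact this.symm
  have hxa : x * a ^ (2 * m + 3) = a ^ (2 * m + 3) * y := by
    have := (Hx (m + 1)).2
    have e : 2 * (m + 1) + 1 = 2 * m + 3 := by ring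
    rw [e] at this
    exact this
  have hxe : x * a ^ (2 * m + 2) = a ^ (2 * m + 2) * x := by
    have := (Hx (m + 1)).1
    have e : 2 * (m + 1) = 2 * m + 2 := by ring
    rw [e] at this
    exact this
  have hye : y * a ^ (2 * m + 2) = a ^ (2 * m + 2) * y := by
    have := (Hy (m + 1)).1
    have e : 2 * (m + 1) = 2 * m + 2 := by ring
    rw [e] at this
    exact this
  -- E1 : d * (x * d) = d * (d * y)
  have hmid : a ^ (2 * m + 3) * (x * d) = a ^ (2 * m + 3) * (d * y) := by
    calc a ^ (2 * m + 3) * (x * d) = (a ^ (2 * m + 3) * x) * d := by rw [mul_assoc]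
      _ = y * (a ^ (2 * m + 3) * d) := by rw [hax, mul_assoc]
      _ = y * a ^ (2 * m + 2) := by rw [← hK]
      _ = a ^ (2 * m + 2) * y := hye
      _ = (a ^ (2 * m + 3) * d) * y := by rw [← hK]
      _ = a ^ (2 * m + 3) * (d * y) := by rw [mul_assoc]
  have E1 : d * (x * d) = d * (d * y) := by
    have h : (d ^ (2 * m + 4) * a ^ (2 * m + 3)) * (x * d)
        = (d ^ (2 * m + 4) * a ^ (2 * m + 3)) * (d * y) := by
      rw [mul_assoc, mul_assoc, hmid]
    rwa [hdK] at h
  -- E2 : (x * d) * d = (d * y) * d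
  have hmid2 : (x * d) * a ^ (2 * m + 3) = (d * y) * a ^ (2 * m + 3) := by
    calc (x * d) * a ^ (2 * m + 3) = x * (d * a ^ (2 * m + 3)) := by rw [mul_assoc]
      _ = x * (a ^ (2 * m + 3) * d) := by rw [((hC.pow_left (2 * m + 3)).symm).eq]
      _ = x * a ^ (2 * m + 2) := by rw [← hK]
      _ = a ^ (2 * m + 2) * x := hxe
      _ = a ^ (2 * m + 3) * d * x := by rw [← hK]
      _ = d * a ^ (2 * m + 3) * x := by rw [(hC.pow_left (2 * m + 3)).eq]
      _ = d * (a ^ (2 * m + 3) * x) := by rw [mul_assoc]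
      _ = d * (y * a ^ (2 * m + 3)) := by rw [hax]
      _ = (d * y) * a ^ (2 * m + 3) := by rw [mul_assoc]
  have E2 : (x * d) * d = (d * y) * d := by
    have h : (x * d) * (a ^ (2 * m + 3) * d ^ (2 * m + 4))
        = (d * y) * (a ^ (2 * m + 3) * d ^ (2 * m + 4)) := by
      rw [← mul_assoc, ← mul_assoc, hmid2]
    rwa [hKd] at h
  -- conclude
  calc x * d = x * (d * d * a) := by rw [hd2a]
    _ = ((x * d) * d) * a := by rw [← mul_assoc, ← mul_assoc]
    _ = ((d * y) * d) * a := by rw [E2]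
    _ = d * y * (d * a) := by rw [mul_assoc]
    _ = d * y * (a * d) := by rw [hc]
    _ = d * (y * a) * d := by rw [← mul_assoc, ← mul_assoc, mul_assoc d y a]
    _ = d * (a * x) * d := by rw [hy]
    _ = (d * a) * (x * d) := by rw [← mul_assoc, mul_assoc (d * a)]
    _ = (a * d) * (x * d) := by rw [hc]
    _ = a * (d * (x * d)) := by rw [mul_assoc]
    _ = a * (d * (d * y)) := by rw [E1]
    _ = (a * (d * d)) * y := by rw [← mul_assoc, ← mul_assoc, mul_assoc a d d]
    _ = d * y := by rw [had2]

end Aux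

theorem stmt0 {R : Type*} [Ring R] (p q d : R) (hp : p * p = p) (hq : q * q = q)
    (hd : IsDrazinInverse (p - q) d) :
    (p * d) * (p * d) = p * d ∧ p * d = d * (1 - q) := by
  obtain ⟨hc, hdd, hn⟩ := hd
  have had2 : (p - q) * (d * d) = d := by rw [← mul_assoc, hc, hdd]
  have hx : p * (p - q) = (p - q) * (1 - q) := by
    have l : p * (p - q) = p - p * q := by rw [mul_sub, hp]
    have r : (p - q) * (1 - q) = p - p * q := by
      rw [mul_sub, mul_one, sub_mul, hq]; abel
    rw [l, r]
  have hy : (1 - q) * (p - q) = (p - q) * p := by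
    have l : (1 - q) * (p - q) = p - q * p := by
      rw [sub_mul, one_mul, mul_sub, hq]; abel
    have r : (p - q) * p = p - q * p := by rw [sub_mul, hp]
    rw [l, r]
  have h1 : p * d = d * (1 - q) := intertwine hc hdd hn hx hy
  have h2 : (1 - q) * d = d * p := intertwine hc hdd hn hy hx
  refine ⟨?_, h1⟩
  have hpq : p * (1 - q) = p * (p - q) := by
    rw [mul_sub, mul_one, mul_sub, hp]
  calc (p * d) * (p * d) = p * (d * p) * d := by
        rw [mul_assoc, mul_assoc, ← mul_assoc d p d]
    _ = p * ((1 - q) * d) * d := by rw [h2]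
    _ = (p * (1 - q)) * (d * d) := by rw [← mul_assoc, mul_assoc (p * (1 - q))]
    _ = (p * (p - q)) * (d * d) := by rw [hpq]
    _ = p * ((p - q) * (d * d)) := by rw [mul_assoc]
    _ = p * d := by rw [had2]
end

section
/- Let p, q be idempotents in a ring R and suppose p − q is Drazin invertible. Then G := (p−q)^D p is an idempotent and G = (1−q)(p−q)^D. -/
private lemma idem_pow {R : Type*} [Monoid R] {e : R} (he : e * e = e) :
    ∀ n : ℕ, e ^ (n + 1) = e := by
  intro n
  induction n with
  | zero => simp
  | succ n ih => rw [pow_succ, ih, he]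

theorem stmt1 {R : Type*} [Ring R] (p q d : R) (hp : p * p = p) (hq : q * q = q)
    (hd : IsDrazinInverse (p - q) d) :
    (d * p) * (d * p) = d * p ∧ d * p = (1 - q) * d := by
  obtain ⟨hc, hdad, k0, hk0⟩ := hd
  set a := p - q with ha
  have hp2 : ∀ x : R, x * p * p = x * p := fun x => by rw [mul_assoc, hp]
  have hq2 : ∀ x : R, x * q * q = x * q := fun x => by rw [mul_assoc, hq]
  -- basic commuting facts
  have had : Commute a d := hc
  have hda : Commute d a := had.symm
  have hca : d * a = a * d := hda.eq
  -- core identities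
  have F1 : d * d * a = d := by rw [mul_assoc, hca, ← mul_assoc]; exact hdad
  have F1' : a * d * d = d := by rw [hc]; exact hdad
  have hd_eq : a * (d * d) = d := by rw [← mul_assoc]; exact F1'
  -- x := a * d is idempotent
  have hxx : (a * d) * (a * d) = a * d := by
    rw [mul_assoc, ← mul_assoc d a d, hdad]
  have hdds : (d * d) * (a * d) = d * d := by
    rw [mul_assoc, ← mul_assoc d a d, hdad]
  -- 1 - a*d is idempotent
  have h1x : (1 - a * d) * (1 - a * d) = 1 - a * d := by
    have e1 : (1 - a * d) * (1 - a * d)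
        = 1 - a * d - a * d + (a * d) * (a * d) := by noncomm_ring
    rw [e1, hxx]; abel
  have hcomm_ax : Commute a (1 - a * d) :=
    (Commute.one_right a).sub_right ((Commute.refl a).mul_right had)
  -- nilpotency gives a^K * (1 - a*d) = 0
  obtain ⟨K, hKnil⟩ : ∃ K : ℕ, a ^ K * (1 - a * d) = 0 := by
    refine ⟨k0 + 1, ?_⟩
    have key : a - a * a * d = a * (1 - a * d) := by noncomm_ring
    have h0 : (a * (1 - a * d)) ^ (k0 + 1) = 0 := by
      rw [← key, pow_succ, hk0, zero_mul]
    rwa [hcomm_ax.mul_pow, idem_pow h1x] at h0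
  have hstep : a ^ K = a ^ K * (a * d) := by
    have h := hKnil
    rw [mul_sub, mul_one, sub_eq_zero] at h
    exact h
  have hstepn : ∀ n, a ^ (K + n) = a ^ (K + n) * (a * d) := by
    intro n
    induction n with
    | zero => simpa using hstep
    | succ n ih =>
      have h1 : a ^ (K + (n + 1)) = a * a ^ (K + n) := by
        rw [show K + (n + 1) = (K + n) + 1 from rfl, pow_succ']
      rw [h1]
      conv_lhs => rw [ih]
      rw [mul_assoc]
  -- a^(K+n+1) * d = a^(K+n)
  have Pn : ∀ n, a ^ (K + n + 1) * d = a ^ (K + n) := by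
    intro n
    have h1 := hstepn n
    rw [← mul_assoc, ← pow_succ] at h1
    exact h1.symm
  -- products of squares
  have hsb : (d * d) * (a * a) = a * d := by
    rw [← mul_assoc, F1, hca]
  have hbs : (a * a) * (d * d) = a * d := by
    rw [mul_assoc, hd_eq]
  have hcomm_sb : Commute (d * d) (a * a) := by
    have h1 : Commute d (a * a) := hda.mul_right hda
    exact h1.mul_left h1
  -- (d*d)^(n+1) * (a*a)^n = d*d
  have C1 : ∀ n, (d * d) ^ (n + 1) * (a * a) ^ n = d * d := by
    intro n
    induction n with
    | zero => simp
    | succ n ih =>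
      rw [pow_succ' (d * d) (n + 1), pow_succ (a * a) n, mul_assoc,
        ← mul_assoc ((d * d) ^ (n + 1)), ih, hsb]
      exact hdds
  have C1' : ∀ n, (a * a) ^ n * (d * d) ^ (n + 1) = d * d := fun n =>
    ((hcomm_sb.symm.pow_pow n (n + 1)).eq).trans (C1 n)
  -- exponent conversion
  have pa : ∀ n : ℕ, (a * a) ^ n = a ^ (n + n) := by
    intro n
    rw [← pow_two, ← pow_mul, two_mul]
  -- gamma: (a*a)^(K+1) * (d*d) = (a*a)^K
  have hgam : (a * a) ^ (K + 1) * (d * d) = (a * a) ^ K := by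
    rw [pa, pa, show K + 1 + (K + 1) = K + (K + 1) + 1 from by omega,
      ← mul_assoc, Pn (K + 1), show K + (K + 1) = K + K + 1 from by omega]
    exact Pn K
  have hdel : (d * d) * (a * a) ^ (K + 1) = (a * a) ^ K :=
    ((hcomm_sb.pow_right (K + 1)).eq).trans hgam
  -- p commutes with a*a
  have hpaa : p * (a * a) = (a * a) * p := by
    rw [ha]
    simp only [mul_sub, sub_mul, ← mul_assoc, hp, hq, hp2, hq2]
    abel
  have hcomm_pb : Commute p (a * a) := hpaa
  have hpbK : ∀ n, p * (a * a) ^ n = (a * a) ^ n * p := fun n =>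
    (hcomm_pb.pow_right n).eq
  -- E1, E2
  have E1 : (d * d) ^ (K + 1) * (a * a) ^ (K + 1) = a * d := by
    rw [← hcomm_sb.mul_pow, hsb]
    exact idem_pow hxx K
  have E2 : (a * a) ^ (K + 1) * (d * d) ^ (K + 1) = a * d := by
    rw [← hcomm_sb.symm.mul_pow, hbs]
    exact idem_pow hxx K
  -- key chain (i): s*p = x*(p*s)
  have Gi : (d * d) * p = (a * d) * (p * (d * d)) := by
    calc (d * d) * p = ((d * d) ^ (K + 1) * (a * a) ^ K) * p := by rw [C1 K]
      _ = (d * d) ^ (K + 1) * (p * (a * a) ^ K) := by rw [mul_assoc, ← hpbK K]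
      _ = (d * d) ^ (K + 1) * (p * ((a * a) ^ (K + 1) * (d * d))) := by rw [← hgam]
      _ = (d * d) ^ (K + 1) * ((p * (a * a) ^ (K + 1)) * (d * d)) := by
          rw [← mul_assoc p]
      _ = (d * d) ^ (K + 1) * (((a * a) ^ (K + 1) * p) * (d * d)) := by
          rw [hpbK (K + 1)]
      _ = ((d * d) ^ (K + 1) * (a * a) ^ (K + 1)) * (p * (d * d)) := by
          simp only [mul_assoc]
      _ = (a * d) * (p * (d * d)) := by rw [E1]
  -- key chain (ii): p*s = (s*p)*x
  have Gii : p * (d * d) = ((d * d) * p) * (a * d) := by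
    calc p * (d * d) = p * ((a * a) ^ K * (d * d) ^ (K + 1)) := by rw [C1' K]
      _ = (p * (a * a) ^ K) * (d * d) ^ (K + 1) := by rw [← mul_assoc]
      _ = ((a * a) ^ K * p) * (d * d) ^ (K + 1) := by rw [hpbK K]
      _ = (((d * d) * (a * a) ^ (K + 1)) * p) * (d * d) ^ (K + 1) := by rw [hdel]
      _ = (d * d) * (((a * a) ^ (K + 1) * p) * (d * d) ^ (K + 1)) := by
          simp only [mul_assoc]
      _ = (d * d) * ((p * (a * a) ^ (K + 1)) * (d * d) ^ (K + 1)) := by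
          rw [← hpbK (K + 1)]
      _ = (d * d) * (p * ((a * a) ^ (K + 1) * (d * d) ^ (K + 1))) := by
          rw [mul_assoc p]
      _ = (d * d) * (p * (a * d)) := by rw [E2]
      _ = ((d * d) * p) * (a * d) := by simp only [mul_assoc]
  -- conclude p commutes with d*d
  have h5 : p * (d * d) = (a * d) * (p * (d * d)) := by
    calc p * (d * d) = ((d * d) * p) * (a * d) := Gii
      _ = ((a * d) * (p * (d * d))) * (a * d) := by rw [Gi]
      _ = (a * d) * ((p * (d * d)) * (a * d)) := by simp only [mul_assoc]
      _ = (a * d) * ((((d * d) * p) * (a * d)) * (a * d)) := by rw [Gii]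
      _ = (a * d) * (((d * d) * p) * ((a * d) * (a * d))) := by
          simp only [mul_assoc]
      _ = (a * d) * (((d * d) * p) * (a * d)) := by rw [hxx]
      _ = (a * d) * (p * (d * d)) := by rw [← Gii]
  have hps : p * (d * d) = (d * d) * p := h5.trans Gi.symm
  -- final identities
  have hap : a * p = (1 - q) * a := by
    rw [ha]
    simp only [mul_sub, sub_mul, one_mul, mul_one, ← mul_assoc, hp, hq, hp2, hq2]
    try abel
  have hpa1q : a * (1 - q) = p * a := by
    rw [ha]
    simp only [mul_sub, sub_mul, one_mul, mul_one, ← mul_assoc, hp, hq, hp2, hq2]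
    try abel
  have h1qp : (1 - q) * p = a * p := by
    rw [ha]
    simp only [mul_sub, sub_mul, one_mul, mul_one, ← mul_assoc, hp, hq, hp2, hq2]
    try abel
  have hg2 : d * p = (1 - q) * d := by
    calc d * p = (a * (d * d)) * p := by rw [hd_eq]
      _ = a * ((d * d) * p) := by rw [mul_assoc]
      _ = a * (p * (d * d)) := by rw [← hps]
      _ = (a * p) * (d * d) := by rw [← mul_assoc]
      _ = ((1 - q) * a) * (d * d) := by rw [hap]
      _ = (1 - q) * (a * (d * d)) := by rw [mul_assoc]
      _ = (1 - q) * d := by rw [hd_eq]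
  have hmid : d * ((1 - q) * d) = p * (d * d) := by
    calc d * ((1 - q) * d) = ((d * d) * a) * ((1 - q) * d) := by rw [F1]
      _ = (d * d) * ((a * (1 - q)) * d) := by simp only [mul_assoc]
      _ = (d * d) * ((p * a) * d) := by rw [hpa1q]
      _ = ((d * d) * p) * (a * d) := by simp only [mul_assoc]
      _ = (p * (d * d)) * (a * d) := by rw [← hps]
      _ = p * ((d * d) * (a * d)) := by simp only [mul_assoc]
      _ = p * (d * d) := by rw [hdds]
  have hg1 : (d * p) * (d * p) = d * p := by
    calc (d * p) * (d * p) = ((1 - q) * d) * ((1 - q) * d) := by rw [hg2]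
      _ = (1 - q) * (d * ((1 - q) * d)) := by simp only [mul_assoc]
      _ = (1 - q) * (p * (d * d)) := by rw [hmid]
      _ = ((1 - q) * p) * (d * d) := by rw [← mul_assoc]
      _ = (a * p) * (d * d) := by rw [h1qp]
      _ = a * (p * (d * d)) := by rw [mul_assoc]
      _ = a * ((d * d) * p) := by rw [hps]
      _ = (a * (d * d)) * p := by rw [← mul_assoc]
      _ = d * p := by rw [hd_eq]
  exact ⟨hg1, hg2⟩
end

section
/- Let p, q be idempotents in a ring R with p − q Drazin invertible. Then q(p−q)^D = (p−q)^D(1−p) and (p−q)^D q = (1−p)(p−q)^D. -/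
/-- Double commutant property of the Drazin inverse. -/
lemma drazin_commutant {R : Type*} [Ring R] {a d x : R} (hd : IsDrazinInverse a d)
    (hx : x * a = a * x) : x * d = d * x := by
  obtain ⟨h1, h2, k, hk⟩ := hd
  obtain ⟨e, he⟩ : ∃ e, e = a * d := ⟨_, rfl⟩
  have had : Commute a d := h1
  have he' : e = d * a := he.trans h1
  have hee : IsIdempotentElem e := by
    show e * e = e
    rw [he]
    calc a * d * (a * d) = a * (d * a * d) := by noncomm_ring
    _ = a * d := by rw [h2]
  have hea : Commute a e := by
    show a * e = e * a
    rw [he]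
    calc a * (a * d) = a * (d * a) := by rw [had.eq]
    _ = a * d * a := by rw [mul_assoc]
  have ha1e : Commute a (1 - e) := (Commute.one_right a).sub_right hea
  have hde : d * e = d := by
    rw [he, ← mul_assoc, h2]
  have hed : e * d = d := by
    rw [he', mul_assoc, ← mul_assoc, h2]
  -- nilpotency with exponent (k+1) = k + 1
  have hne : a - a * a * d = a * (1 - e) := by rw [he]; noncomm_ring
  have hnil : (a * (1 - e)) ^ (k+1) = 0 := by
    rw [← hne, pow_succ, hk, zero_mul]
  have h1e : IsIdempotentElem (1 - e) := hee.one_sub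
  have ham : a ^ (k+1) * (1 - e) = 0 := by
    rw [ha1e.mul_pow (k+1), h1e.pow_succ_eq] at hnil
    exact hnil
  have heam : e = a ^ (k+1) * d ^ (k+1) := by
    rw [← had.mul_pow (k+1), ← he, hee.pow_succ_eq]
  have heam' : e = d ^ (k+1) * a ^ (k+1) := by
    rw [← had.symm.mul_pow (k+1), ← he', hee.pow_succ_eq]
  have hxa : x * a ^ (k+1) = a ^ (k+1) * x := ((show Commute x a from hx).pow_right (k+1)).eq
  have h5 : e * x * (1 - e) = 0 := by
    calc e * x * (1 - e) = (d ^ (k+1) * a ^ (k+1)) * x * (1 - e) := by rw [← heam']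
    _ = d ^ (k+1) * (a ^ (k+1) * x) * (1 - e) := by noncomm_ring
    _ = d ^ (k+1) * (x * a ^ (k+1)) * (1 - e) := by rw [hxa]
    _ = d ^ (k+1) * x * (a ^ (k+1) * (1 - e)) := by noncomm_ring
    _ = 0 := by rw [ham, mul_zero]
  have h6 : (1 - e) * x * e = 0 := by
    have h1ea : (1 - e) * a ^ (k+1) = a ^ (k+1) * (1 - e) := ((ha1e.symm).pow_right (k+1)).eq
    calc (1 - e) * x * e = (1 - e) * x * (a ^ (k+1) * d ^ (k+1)) := by rw [← heam]
    _ = (1 - e) * (x * a ^ (k+1)) * d ^ (k+1) := by noncomm_ring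
    _ = (1 - e) * (a ^ (k+1) * x) * d ^ (k+1) := by rw [← hxa]
    _ = ((1 - e) * a ^ (k+1)) * (x * d ^ (k+1)) := by noncomm_ring
    _ = (a ^ (k+1) * (1 - e)) * (x * d ^ (k+1)) := by rw [h1ea]
    _ = 0 := by rw [ham, zero_mul]
  have hxe : x * e = e * x := by
    have e1 : e * x = e * x * e := by
      have h5' := h5
      rw [mul_sub, mul_one, sub_eq_zero] at h5'
      exact h5'
    have e2 : x * e = e * x * e := by
      have h6' := h6
      rw [sub_mul, one_mul, sub_mul, sub_eq_zero] at h6'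
      exact h6'
    rw [e2, ← e1]
  calc x * d = x * (e * d) := by rw [hed]
  _ = (x * e) * d := by rw [mul_assoc]
  _ = (e * x) * d := by rw [hxe]
  _ = d * (a * x) * d := by rw [he']; noncomm_ring
  _ = d * (x * a) * d := by rw [hx]
  _ = d * x * e := by rw [he]; noncomm_ring
  _ = d * (x * e) := by rw [mul_assoc]
  _ = d * (e * x) := by rw [hxe]
  _ = (d * e) * x := by rw [mul_assoc]
  _ = d * x := by rw [hde]

theorem stmt2 {R : Type*} [Ring R] (p q d : R) (hp : p * p = p) (hq : q * q = q)
    (hd : IsDrazinInverse (p - q) d) :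
    q * d = d * (1 - p) ∧ d * q = (1 - p) * d := by
  obtain ⟨h1, h2, h3⟩ := hd
  obtain ⟨a, ha⟩ : ∃ a, a = p - q := ⟨_, rfl⟩
  rw [← ha] at h1 h2 h3
  have hp1 : ∀ x : R, p * (p * x) = p * x := fun x => by rw [← mul_assoc, hp]
  have hq1 : ∀ x : R, q * (q * x) = q * x := fun x => by rw [← mul_assoc, hq]
  -- q and p commute with a^2
  have hqa2 : q * (a * a) = (a * a) * q := by
    rw [ha]
    simp only [mul_sub, sub_mul, mul_one, one_mul, mul_assoc, hp, hq, hp1, hq1]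
    abel
  have hpa2 : p * (a * a) = (a * a) * p := by
    rw [ha]
    simp only [mul_sub, sub_mul, mul_one, one_mul, mul_assoc, hp, hq, hp1, hq1]
    abel
  -- interchange relations
  have hqa : q * a = a * (1 - p) := by
    rw [ha]
    simp only [mul_sub, sub_mul, mul_one, one_mul, mul_assoc, hp, hq, hp1, hq1]
    abel
  have haq : a * q = (1 - p) * a := by
    rw [ha]
    simp only [mul_sub, sub_mul, mul_one, one_mul, mul_assoc, hp, hq, hp1, hq1]
    abel
  -- d*d is the Drazin inverse of a*a
  have hdsq : IsDrazinInverse (a * a) (d * d) := by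
    refine ⟨?_, ?_, ?_⟩
    · calc a * a * (d * d) = a * (a * d) * d := by noncomm_ring
      _ = a * (d * a) * d := by rw [h1]
      _ = (a * d) * (a * d) := by noncomm_ring
      _ = (d * a) * (d * a) := by rw [h1]
      _ = d * (a * d) * a := by noncomm_ring
      _ = d * (d * a) * a := by rw [← h1]
      _ = d * d * (a * a) := by noncomm_ring
    · calc d * d * (a * a) * (d * d) = d * (d * a) * ((a * d) * d) := by noncomm_ring
      _ = d * (d * a) * ((d * a) * d) := by rw [h1]
      _ = d * (d * a * d) * (a * d) := by noncomm_ring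
      _ = d * d * (a * d) := by rw [h2]
      _ = d * (d * a * d) := by noncomm_ring
      _ = d * d := by rw [h2]
    · have E : a * a * (a * a) * (d * d) = a * (a * (a * d)) := by
        calc a * a * (a * a) * (d * d) = a * (a * (a * ((a * d) * d))) := by noncomm_ring
        _ = a * (a * (a * ((d * a) * d))) := by rw [h1]
        _ = a * (a * (a * d)) := by rw [h2]
      have F : (a - a * a * d) * (a - a * a * d) = a * a - a * (a * (a * d)) := by
        calc (a - a * a * d) * (a - a * a * d)
            = a * a - a * (a * (a * d)) - a * (a * (d * a)) +
              a * (a * (d * (a * (a * d)))) := by noncomm_ring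
        _ = a * a - a * (a * (a * d)) - a * (a * (a * d)) +
              a * (a * (d * (a * (a * d)))) := by rw [← h1]
        _ = a * a - a * (a * (a * d)) - a * (a * (a * d)) +
              a * (a * ((d * a) * (a * d))) := by noncomm_ring
        _ = a * a - a * (a * (a * d)) - a * (a * (a * d)) +
              a * (a * ((a * d) * (a * d))) := by rw [← h1]
        _ = a * a - a * (a * (a * d)) - a * (a * (a * d)) +
              a * (a * (a * (d * a * d))) := by noncomm_ring
        _ = a * a - a * (a * (a * d)) - a * (a * (a * d)) +
              a * (a * (a * d)) := by rw [h2]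
        _ = a * a - a * (a * (a * d)) := by abel
      have key : a * a - a * a * (a * a) * (d * d) = (a - a * a * d) * (a - a * a * d) := by
        rw [F, E]
      obtain ⟨k, hk⟩ := h3
      refine ⟨k, ?_⟩
      rw [key, ← sq, ← pow_mul, two_mul, pow_add, hk, zero_mul]
  -- commutation of q and (1-p) with d*d
  have hpd2 : p * (d * d) = (d * d) * p := drazin_commutant hdsq hpa2
  have h1pd2 : (1 - p) * (d * d) = (d * d) * (1 - p) := by
    rw [sub_mul, mul_sub, one_mul, mul_one, hpd2]
  have hdad : d = a * (d * d) := by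
    calc d = d * a * d := h2.symm
    _ = (a * d) * d := by rw [h1]
    _ = a * (d * d) := by noncomm_ring
  have hdda : d = (d * d) * a := by
    calc d = d * a * d := h2.symm
    _ = d * (a * d) := by noncomm_ring
    _ = d * (d * a) := by rw [← h1]
    _ = (d * d) * a := by noncomm_ring
  constructor
  · calc q * d = q * (a * (d * d)) := by rw [← hdad]
    _ = (q * a) * (d * d) := by noncomm_ring
    _ = (a * (1 - p)) * (d * d) := by rw [hqa]
    _ = a * ((1 - p) * (d * d)) := by noncomm_ring
    _ = a * ((d * d) * (1 - p)) := by rw [h1pd2]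
    _ = (a * (d * d)) * (1 - p) := by noncomm_ring
    _ = d * (1 - p) := by rw [← hdad]
  · calc d * q = ((d * d) * a) * q := by rw [← hdda]
    _ = (d * d) * (a * q) := by noncomm_ring
    _ = (d * d) * ((1 - p) * a) := by rw [haq]
    _ = ((d * d) * (1 - p)) * a := by noncomm_ring
    _ = ((1 - p) * (d * d)) * a := by rw [← h1pd2]
    _ = (1 - p) * ((d * d) * a) := by noncomm_ring
    _ = (1 - p) * d := by rw [← hdda]
end

section
/- Let p, q be idempotents in a ring R with p − q Drazin invertible, and set H := (p−q)^D(p−q). Then qH = Hq. -/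
/-- If `b` is a Drazin inverse of `c` and `x` commutes with `c`, then `x` commutes with `b`. -/
theorem drazin_comm_aux {R : Type*} [Ring R] (c b x : R) (h1 : c * b = b * c)
    (h2 : b * c * b = b) (h3 : IsNilpotent (c - c * (c * b))) (hx : x * c = c * x) :
    x * b = b * x := by
  obtain ⟨n, hn⟩ := h3
  set M := n + 1 with hM
  have hcb : Commute c b := h1
  have hxc : Commute x c := hx
  have hcbcb : c * b * (c * b) = c * b := by
    calc c * b * (c * b) = c * (b * c * b) := by rw [mul_assoc, ← mul_assoc b c b]
      _ = c * b := by rw [h2]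
  have hu : (1 - c * b) * (1 - c * b) = 1 - c * b := by
    have e : (1 - c * b) * (1 - c * b) = 1 - (c * b) - (c * b) + (c * b) * (c * b) := by
      noncomm_ring
    rw [e, hcbcb]; abel
  have hec : Commute (c * b) c := by
    show c * b * c = c * (c * b)
    rw [mul_assoc, h1, ← mul_assoc, h1]
  have hcu : Commute c (1 - c * b) :=
    Commute.sub_right (Commute.one_right c) hec.symm
  have hupow : ∀ k : ℕ, (1 - c * b) ^ (k + 1) = 1 - c * b := by
    intro k
    induction k with
    | zero => simp
    | succ k ih => rw [pow_succ, ih, hu]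
  -- c ^ M absorbs the idempotent c * b
  have hA : c ^ M * (c * b) = c ^ M := by
    have h0 : (c - c * (c * b)) ^ M = 0 := by rw [hM, pow_succ, hn, zero_mul]
    have hfac : c - c * (c * b) = c * (1 - c * b) := by rw [mul_sub, mul_one]
    rw [hfac, hcu.mul_pow, hupow n] at h0
    rw [mul_sub, mul_one] at h0
    exact (sub_eq_zero.mp h0).symm
  have hb2 : b * (b * c) = b := by rw [← h1, ← mul_assoc, h2]
  have hB : ∀ k : ℕ, b ^ (k + 1) * c ^ k = b := by
    intro k
    induction k with
    | zero => simp
    | succ k ih =>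
      calc b ^ (k + 1 + 1) * c ^ (k + 1)
          = b ^ (k + 1) * b * (c ^ k * c) := by rw [pow_succ b (k + 1), pow_succ c k]
        _ = b ^ (k + 1) * (b * c ^ k) * c := by simp only [mul_assoc]
        _ = b ^ (k + 1) * (c ^ k * b) * c := by rw [← hcb.pow_left k]
        _ = b ^ (k + 1) * c ^ k * (b * c) := by simp only [mul_assoc]
        _ = b * (b * c) := by rw [ih]
        _ = b := hb2
  have hBM : b ^ (M + 1) * c ^ M = b := hB M
  -- x * b = (c*b) * (x*b)
  have hL : x * b = c * b * (x * b) := by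
    calc x * b = x * (b ^ (M + 1) * c ^ M) := by rw [hBM]
      _ = x * (c ^ M * b ^ (M + 1)) := by rw [(hcb.symm.pow_pow (M + 1) M)]
      _ = x * c ^ M * b ^ (M + 1) := by rw [mul_assoc]
      _ = c ^ M * x * b ^ (M + 1) := by rw [hxc.pow_right M]
      _ = c ^ M * (c * b) * (x * b ^ (M + 1)) := by
          conv_lhs => rw [← hA]
          simp only [mul_assoc]
      _ = c * b * (c ^ M * (x * b ^ (M + 1))) := by
          rw [(hec.pow_right M).symm.eq]; simp only [mul_assoc]
      _ = c * b * (x * (c ^ M * b ^ (M + 1))) := by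
          rw [← mul_assoc (c ^ M) x, ← hxc.pow_right M]; simp only [mul_assoc]
      _ = c * b * (x * b) := by rw [← (hcb.symm.pow_pow (M + 1) M), hBM]
  -- b * x = (b*x) * (c*b)
  have hR : b * x = b * x * (c * b) := by
    calc b * x = b ^ (M + 1) * c ^ M * x := by rw [hBM]
      _ = b ^ (M + 1) * (x * c ^ M) := by rw [mul_assoc, ← hxc.pow_right M]
      _ = b ^ (M + 1) * (x * (c ^ M * (c * b))) := by rw [hA]
      _ = b ^ (M + 1) * (x * c ^ M) * (c * b) := by simp only [mul_assoc]
      _ = b ^ (M + 1) * (c ^ M * x) * (c * b) := by rw [hxc.pow_right M]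
      _ = b * x * (c * b) := by rw [← mul_assoc (b ^ (M + 1)) (c ^ M) x, hBM]
  calc x * b = c * b * (x * b) := hL
    _ = b * (c * (x * b)) := by rw [h1, mul_assoc b c]
    _ = b * (c * x * b) := by rw [mul_assoc c x b]
    _ = b * (x * c * b) := by rw [← hx]
    _ = b * x * (c * b) := by simp only [mul_assoc]
    _ = b * x := hR.symm

theorem stmt3 {R : Type*} [Ring R] (p q d : R) (hp : p * p = p) (hq : q * q = q)
    (hd : IsDrazinInverse (p - q) d) :
    q * (d * (p - q)) = (d * (p - q)) * q := by
  obtain ⟨h1, h2, h3⟩ := hd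
  set a := p - q with ha
  -- the commutative subring generated by a and d
  have hcomm : ∀ x ∈ ({a, d} : Set R), ∀ y ∈ ({a, d} : Set R), x * y = y * x := by
    rintro x (rfl | rfl) y (rfl | rfl) <;> first | rfl | exact h1 | exact h1.symm
  letI : CommRing (Subring.closure ({a, d} : Set R)) :=
    Subring.closureCommRingOfComm hcomm
  let A : Subring.closure ({a, d} : Set R) := ⟨a, Subring.subset_closure (by simp)⟩
  let D : Subring.closure ({a, d} : Set R) := ⟨d, Subring.subset_closure (by simp)⟩
  have cA : (A : R) = a := rfl
  have cD : (D : R) = d := rfl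
  have h2' : D * A * D = D := Subtype.ext (by simpa [cA, cD] using h2)
  -- identities in the commutative subring, pushed down to R
  have i1 : (a * a) * (d * d) = (d * d) * (a * a) := by
    simpa [cA, cD] using Subtype.ext_iff.mp (mul_comm (A * A) (D * D))
  have i2 : (d * d) * (a * a) * (d * d) = d * d := by
    have e : D * D * (A * A) * (D * D) = D * D := by
      linear_combination (D * A * D + D) * h2'
    simpa [cA, cD] using Subtype.ext_iff.mp e
  have i3 : a * a - (a * a) * ((a * a) * (d * d)) = (a - a * a * d) * (a - a * a * d) := by
    have e : A * A - (A * A) * ((A * A) * (D * D)) = (A - A * A * D) * (A - A * A * D) := by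
      linear_combination (-(2 : Subring.closure ({a, d} : Set R)) * (A * A * A)) * h2'
    simpa [cA, cD] using Subtype.ext_iff.mp e
  have i4 : d * a = (d * d) * (a * a) := by
    have e : D * A = (D * D) * (A * A) := by linear_combination (-A) * h2'
    simpa [cA, cD] using Subtype.ext_iff.mp e
  -- q commutes with a^2
  have hq' : ∀ r : R, q * (q * r) = q * r := fun r => by rw [← mul_assoc, hq]
  have hqc : q * (a * a) = (a * a) * q := by
    have e1 : a * a = p * p - p * q - q * p + q * q := by rw [ha]; noncomm_ring
    rw [hp, hq] at e1
    rw [e1]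
    simp only [mul_sub, mul_add, sub_mul, add_mul, mul_assoc, hq, hq']
    abel
  -- nilpotency for a^2
  have h3c : IsNilpotent (a * a - (a * a) * ((a * a) * (d * d))) := by
    rw [i3]
    obtain ⟨m, hm⟩ := h3
    exact ⟨m, by rw [← sq, ← pow_mul, mul_comm 2 m, pow_mul, hm, sq, mul_zero]⟩
  have comm2 : q * (d * d) = (d * d) * q :=
    drazin_comm_aux (a * a) (d * d) q i1 i2 h3c hqc
  calc q * (d * a) = q * ((d * d) * (a * a)) := by rw [i4]
    _ = q * (d * d) * (a * a) := by rw [← mul_assoc]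
    _ = (d * d) * q * (a * a) := by rw [comm2]
    _ = (d * d) * ((a * a) * q) := by rw [mul_assoc, hqc]
    _ = (d * d) * (a * a) * q := by rw [← mul_assoc]
    _ = d * a * q := by rw [i4]
end

section
/- Let p, q be idempotents in a ring R with p − q Drazin invertible. Setting F := p(p−q)^D, G := (p−q)^D p, H := (p−q)^D(p−q), one has Fp = pG = pH = Hp. -/
namespace IsDrazinInverse

variable {R : Type*} [Ring R] {a d : R}

theorem commute (h : IsDrazinInverse a d) : Commute a d := h.1

theorem mul_mul_self (h : IsDrazinInverse a d) : a * (d * d) = d := by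
  rw [← mul_assoc, h.1, h.2.1]

theorem mul_self_mul_mul_self (h : IsDrazinInverse a d) : a * a * (d * d) = a * d := by
  rw [mul_assoc a a, h.mul_mul_self]

theorem mul_self_mul (h : IsDrazinInverse a d) : d * d * a = d := by
  rw [mul_assoc, ← h.1, ← mul_assoc, h.2.1]

theorem commute_one_sub_mul (h : IsDrazinInverse a d) : Commute a (1 - a * d) :=
  (Commute.one_right a).sub_right ((Commute.refl a).mul_right h.commute)

theorem isIdempotentElem_mul (h : IsDrazinInverse a d) : IsIdempotentElem (a * d) := by
  rw [IsIdempotentElem, mul_assoc, ← mul_assoc d, h.2.1]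

theorem exists_pow_mul_one_sub_eq_zero (h : IsDrazinInverse a d) :
    ∃ k : ℕ, a ^ k * (1 - a * d) = 0 := by
  obtain ⟨k, hk⟩ := h.2.2
  refine ⟨k + 1, ?_⟩
  rw [← h.isIdempotentElem_mul.one_sub.pow_succ_eq k, ← h.commute_one_sub_mul.mul_pow,
    mul_sub, mul_one, ← mul_assoc, pow_succ, hk, zero_mul]

theorem eq_pow_succ_mul_pow (h : IsDrazinInverse a d) (k : ℕ) : d = d ^ (k + 1) * a ^ k := by
  rw [pow_succ', mul_assoc, ← h.commute.symm.mul_pow]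
  induction k with
  | zero => rw [pow_zero, mul_one]
  | succ k ih => rw [pow_succ', ← mul_assoc, ← mul_assoc, h.mul_self_mul, ← ih]

theorem commute_of_commute (h : IsDrazinInverse a d) {x : R} (hx : Commute x a) :
    Commute x d := by
  obtain ⟨k, hk⟩ := h.exists_pow_mul_one_sub_eq_zero
  have hk' : (1 - a * d) * a ^ k = 0 := by
    rwa [← (h.commute_one_sub_mul.pow_left k).eq]
  have hdk := h.eq_pow_succ_mul_pow k
  -- `a ^ k` kills `1 - a * d` on both sides, and `d` factors through `a ^ k` on both sides
  have hdx : d * x = d * x * (a * d) := by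
    have : d * x * (1 - a * d) = 0 := by
      nth_rewrite 1 [hdk]
      rw [mul_assoc _ (a ^ k), ← (hx.pow_right k).eq, ← mul_assoc, mul_assoc, hk, mul_zero]
    rwa [mul_sub, mul_one, sub_eq_zero] at this
  have hxd : x * d = a * d * x * d := by
    have : (1 - a * d) * x * d = 0 := by
      nth_rewrite 2 [hdk]
      rw [(h.commute.symm.pow_pow (k + 1) k).eq, ← mul_assoc, mul_assoc _ x,
        (hx.pow_right k).eq, ← mul_assoc, hk', zero_mul, zero_mul]
    rwa [sub_mul, sub_mul, one_mul, sub_eq_zero] at this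
  rw [Commute, SemiconjBy, hxd, hdx, ← mul_assoc, mul_assoc d x a, hx.eq, ← mul_assoc,
    ← h.commute.eq]

theorem mul_self (h : IsDrazinInverse a d) : IsDrazinInverse (a * a) (d * d) := by
  have hc : Commute a d := h.commute
  refine ⟨((hc.mul_left hc).mul_right (hc.mul_left hc)).eq, ?_, ?_⟩
  · rw [← mul_assoc, ← mul_assoc (d * d) a a, h.mul_self_mul, h.2.1]
  · have hfac : a * a - a * a * (a * a) * (d * d) = (a - a * a * d) * (a + a * a * d) := by
      have hda : ∀ t : R, d * (a * t) = a * (d * t) := fun t => by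
        rw [← mul_assoc, ← hc.eq, mul_assoc]
      simp only [sub_mul, mul_add, mul_assoc, hda, hc.symm.eq]
      abel
    have hca : Commute a (a * a * d) := ((Commute.refl a).mul_right (Commute.refl a)).mul_right hc
    rw [hfac]
    exact (((Commute.refl a).add_right hca).sub_left
      (hca.symm.add_right (Commute.refl _))).isNilpotent_mul_right h.2.2

end IsDrazinInverse

namespace IsIdempotentElem

variable {R : Type*} [Ring R] {p q : R}

theorem commute_sub_mul_sub (hp : IsIdempotentElem p) (hq : IsIdempotentElem q) :
    Commute p ((p - q) * (p - q)) := by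
  have hp' : ∀ t : R, p * (p * t) = p * t := fun t => by rw [← mul_assoc, hp.eq]
  simp only [Commute, SemiconjBy, mul_sub, sub_mul, mul_assoc, hp', hp.eq, hq.eq]
  abel

theorem mul_sub_mul_eq_zero (hp : IsIdempotentElem p) (hq : IsIdempotentElem q) :
    p * (p - q) * q = 0 := by
  rw [mul_sub, sub_mul, hp.eq, mul_assoc, hq.eq, sub_self]

end IsIdempotentElem

theorem stmt4 {R : Type*} [Ring R] (p q d : R) (hp : p * p = p) (hq : q * q = q)
    (hd : IsDrazinInverse (p - q) d) :
    (p * d) * p = p * (d * p) ∧ p * (d * p) = p * (d * (p - q)) ∧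
      p * (d * (p - q)) = (d * (p - q)) * p := by
  have hp : IsIdempotentElem p := hp
  have hq : IsIdempotentElem q := hq
  have hpd : Commute p (d * d) := hd.mul_self.commute_of_commute (hp.commute_sub_mul_sub hq)
  have hqd : Commute q (d * d) := hd.mul_self.commute_of_commute <| by
    rw [show (p - q) * (p - q) = (q - p) * (q - p) by noncomm_ring]
    exact hq.commute_sub_mul_sub hp
  have hpdq : p * d * q = 0 := by
    rw [← hd.mul_mul_self, mul_assoc, mul_assoc, ← hqd.eq, ← mul_assoc, ← mul_assoc,
      hp.mul_sub_mul_eq_zero hq, zero_mul]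
  refine ⟨mul_assoc p d p, ?_, ?_⟩
  · rw [mul_sub, mul_sub, ← mul_assoc p d q, hpdq, sub_zero]
  · rw [← hd.commute.eq, ← hd.mul_self_mul_mul_self, ← mul_assoc,
      (hp.commute_sub_mul_sub hq).eq, mul_assoc, hpd.eq]
    simp only [mul_assoc]
end

section
/- Let p, q be idempotents in a ring R with p − q Drazin invertible. Then 1 − pqp is Drazin invertible with (1 − pqp)^D = ((p−q)^D)² p + 1 − p. -/
theorem drazin_sq {R : Type*} [Ring R] {a d : R} (h : IsDrazinInverse a d) :
    IsDrazinInverse (a * a) (d * d) := by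
  obtain ⟨h1, h2, hn⟩ := h
  have cad : Commute a d := h1
  have had : ∀ x : R, a * (d * x) = d * (a * x) := fun x => by
    rw [← mul_assoc, h1, mul_assoc]
  have r1 : d * (d * a) = d := by rw [← h1, ← mul_assoc, h2]
  have r2 : ∀ x : R, d * (d * (a * x)) = d * x := fun x => by
    rw [← mul_assoc, ← mul_assoc, mul_assoc d d a, r1]
  have caddd : Commute (a * a) (d * d) :=
    ((cad.mul_left cad).mul_right (cad.mul_left cad))
  refine ⟨caddd.eq, ?_, ?_⟩
  · simp only [mul_assoc, h1, had, r1, r2]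
  · have key : a * a - a * a * (a * a) * (d * d) = (a - a * a * d) * (a - a * a * d) := by
      simp only [sub_mul, mul_sub, mul_assoc, h1, had, r1, r2]
      abel
    obtain ⟨k, hk⟩ := hn
    exact ⟨k, by rw [key, ← sq, ← pow_mul, mul_comm 2 k, pow_mul, hk, zero_pow two_ne_zero]⟩

theorem drazin_comm {R : Type*} [Ring R] {a d x : R}
    (h : IsDrazinInverse a d) (hx : x * a = a * x) : x * d = d * x := by
  obtain ⟨h1, h2, n, hn⟩ := h
  rcases n with _ | m
  · have : (1 : R) = 0 := by simpa using hn
    have := subsingleton_of_zero_eq_one this.symm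
    exact Subsingleton.elim _ _
  have hee : (a*d) * (a*d) = a*d := by
    rw [mul_assoc a d (a*d), ← mul_assoc d a d, h2]
  have hea : (a*d) * a = a * (a*d) := by rw [mul_assoc, ← h1]
  have hde : d * (a*d) = d := by rw [← mul_assoc, h2]
  have hed : (a*d) * d = d := by rw [h1, h2]
  have hc : a - a * a * d = a * (1 - a*d) := by
    rw [mul_sub, mul_one, ← mul_assoc]
  rw [hc] at hn
  generalize hEe : a * d = E at hee hea hde hed hn
  have cad : Commute a d := h1
  have cax : Commute x a := hx
  have caE : Commute a (1 - E) := (Commute.one_right a).sub_right hea.symm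
  have hidem : IsIdempotentElem (1 - E) := IsIdempotentElem.one_sub hee
  have h1en : (1 - E) ^ (m+1) = 1 - E := hidem.pow_succ_eq m
  have hEn : E ^ (m+1) = E := IsIdempotentElem.pow_succ_eq m hee
  have han : a ^ (m+1) * (1 - E) = 0 := by
    rw [← h1en, ← caE.mul_pow]; exact hn
  have hxan : x * a ^ (m+1) = a ^ (m+1) * x := cax.pow_right (m+1)
  have hEad : E = a ^ (m+1) * d ^ (m+1) := by rw [← hEe, ← cad.mul_pow, hEe, hEn]
  have hEda : E = d ^ (m+1) * a ^ (m+1) := by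
    rw [hEad, (cad.pow_pow (m+1) (m+1)).eq]
  have k1 : E * x = E * x * E := by
    have h0 : E * x * (1 - E) = 0 := by
      calc E * x * (1 - E) = d ^ (m+1) * (a ^ (m+1) * x) * (1 - E) := by
            rw [hEda, mul_assoc (d^(m+1)) _ x]
        _ = d ^ (m+1) * x * (a ^ (m+1) * (1 - E)) := by
            rw [← hxan, ← mul_assoc, mul_assoc (d^(m+1) * x)]
        _ = 0 := by rw [han, mul_zero]
    rwa [mul_sub, mul_one, sub_eq_zero] at h0
  have k2 : x * E = E * x * E := by
    have h0 : (1 - E) * x * E = 0 := by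
      calc (1 - E) * x * E = (1 - E) * (x * a ^ (m+1)) * d ^ (m+1) := by
            rw [hEad]; simp only [mul_assoc]
        _ = (1 - E) * a ^ (m+1) * (x * d ^ (m+1)) := by
            rw [hxan, ← mul_assoc, ← mul_assoc, mul_assoc ((1-E) * a^(m+1))]
        _ = 0 := by rw [(caE.symm.pow_right (m+1)).eq, han, zero_mul]
    rwa [sub_mul, one_mul, sub_mul, sub_eq_zero] at h0
  have hxe : x * E = E * x := k2.trans k1.symm
  have hfa : (x * d - d * x) * a = 0 := by
    rw [sub_mul, mul_assoc x d a, ← h1, hEe, mul_assoc d x a, hx,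
      ← mul_assoc d a x, ← h1, hEe, hxe, sub_self]
  have hfE : (x * d - d * x) * E = x * d - d * x := by
    rw [sub_mul, mul_assoc x d E, hde, mul_assoc d x E, hxe, ← mul_assoc d E x, hde]
  calc x * d = x * d - d * x + d * x := by abel
    _ = (x * d - d * x) * E + d * x := by rw [hfE]
    _ = (x * d - d * x) * a * d + d * x := by rw [mul_assoc, hEe]
    _ = d * x := by rw [hfa, zero_mul, zero_add]

theorem drazin_helper {R : Type*} [Ring R] (p s t : R) (hpp : p*p = p) (hsp : p*s = s*p)
    (htp : p*t = t*p) (hts : t*s = s*t) (htst : t*s*t = t)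
    (hnil : IsNilpotent (s - s*s*t)) :
    IsDrazinInverse (1 - p + s*p) (t*p + 1 - p) := by
  have e1 : ∀ x : R, p*(p*x) = p*x := fun x => by rw [← mul_assoc, hpp]
  have e2 : ∀ x : R, p*(s*x) = s*(p*x) := fun x => by rw [← mul_assoc, hsp, mul_assoc]
  have e3 : ∀ x : R, p*(t*x) = t*(p*x) := fun x => by rw [← mul_assoc, htp, mul_assoc]
  have e4 : ∀ x : R, t*(s*x) = s*(t*x) := fun x => by rw [← mul_assoc, hts, mul_assoc]
  have e5 : s*(t*t) = t := by rw [← mul_assoc, ← hts, htst]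
  have e6 : ∀ x : R, s*(t*(t*x)) = t*x := fun x => by
    rw [← mul_assoc, ← mul_assoc, ← hts, htst]
  refine ⟨?_, ?_, ?_⟩
  · simp only [mul_add, add_mul, mul_sub, sub_mul, mul_one, one_mul, mul_assoc,
      e1, e2, e3, e4, e5, e6, hpp, hsp, htp, hts]
    abel
  · simp only [mul_add, add_mul, mul_sub, sub_mul, mul_one, one_mul, mul_assoc,
      e1, e2, e3, e4, e5, e6, hpp, hsp, htp, hts]
    abel
  · have key : (1 - p + s*p) - (1 - p + s*p)*(1 - p + s*p)*(t*p + 1 - p)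
        = (s - s*s*t)*p := by
      simp only [mul_add, add_mul, mul_sub, sub_mul, mul_one, one_mul, mul_assoc,
        e1, e2, e3, e4, e5, e6, hpp, hsp, htp, hts]
      abel
    rw [key]
    obtain ⟨k, hk⟩ := hnil
    have csp : Commute s p := hsp.symm
    have ctp : Commute t p := htp.symm
    have ccp : Commute (s - s*s*t) p := csp.sub_left ((csp.mul_left csp).mul_left ctp)
    exact ⟨k, by rw [ccp.mul_pow, hk, zero_mul]⟩

theorem stmt6 {R : Type*} [Ring R] (p q d : R) (hp : p * p = p) (hq : q * q = q)
    (hd : IsDrazinInverse (p - q) d) :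
    IsDrazinInverse (1 - p * q * p) (d ^ 2 * p + 1 - p) := by
  have ep : ∀ x : R, p*(p*x) = p*x := fun x => by rw [← mul_assoc, hp]
  have eq' : ∀ x : R, q*(q*x) = q*x := fun x => by rw [← mul_assoc, hq]
  set s : R := (p - q) * (p - q) with hs
  set t : R := d * d with ht
  have hps : p * s = s * p := by
    rw [hs]
    simp only [mul_sub, sub_mul, mul_assoc, ep, eq', hp, hq]
    abel
  have hd2 : IsDrazinInverse s t := drazin_sq hd
  have hpt : p * t = t * p := drazin_comm hd2 hps
  have hts : t * s = s * t := hd2.1.symm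
  have htst : t * s * t = t := hd2.2.1
  have hnil : IsNilpotent (s - s*s*t) := hd2.2.2
  have hspval : s * p = p - p*q*p := by
    rw [hs]
    simp only [mul_sub, sub_mul, mul_assoc, ep, eq', hp, hq]
    abel
  have hB : 1 - p*q*p = 1 - p + s*p := by rw [hspval]; abel
  have hD : d ^ 2 * p + 1 - p = t*p + 1 - p := by rw [ht, sq]
  rw [hB, hD]
  exact drazin_helper p s t hp hps hpt hts htst hnil
end

section
/- Let p, q be idempotents in a ring R with p − q Drazin invertible. Then p − pqp is Drazin invertible with (p − pqp)^D = ((p−q)^D)² p = p ((p−q)^D)². -/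
/-- The square of a Drazin inverse is a Drazin inverse of the square. -/
theorem IsDrazinInverse.sq' {R : Type*} [Ring R] {a b : R} (h : IsDrazinInverse a b) :
    IsDrazinInverse (a * a) (b * b) := by
  obtain ⟨hab, hbab, k, hk⟩ := h
  have hba : b * a = a * b := hab.symm
  have hba2 : ∀ x : R, b * (a * x) = a * (b * x) := fun x => by
    rw [← mul_assoc, hba, mul_assoc]
  refine ⟨?_, ?_, ?_⟩
  · simp only [mul_assoc, hba2, hba]
  · have hbba : b * b * a = b := by
      rw [mul_assoc, hba, ← mul_assoc, hbab]
    calc b * b * (a * a) * (b * b)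
        = ((b * b * a) * a) * (b * b) := by simp only [mul_assoc]
      _ = (b * a) * (b * b) := by rw [hbba]
      _ = ((b * a) * b) * b := by simp only [mul_assoc]
      _ = b * b := by rw [hbab]
  · have hmc : a * a - (a * a) * (a * a) * (b * b)
        = (a - a * a * b) * (a + a * a * b) := by
      simp only [mul_add, add_mul, sub_mul, mul_sub, mul_assoc, hba2, hba]
      abel
    have hnc : Commute (a - a * a * b) (a + a * a * b) := by
      show _ = _
      simp only [mul_add, add_mul, sub_mul, mul_sub, mul_assoc, hba2, hba]
      abel
    exact ⟨k, by rw [hmc, hnc.mul_pow, hk, zero_mul]⟩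

/-- Double commutant property of Drazin inverses. -/
theorem IsDrazinInverse.commute' {R : Type*} [Ring R] {a b x : R} (h : IsDrazinInverse a b)
    (hx : x * a = a * x) : x * b = b * x := by
  obtain ⟨hab, hbab, k, hk⟩ := h
  set K := k + 1 with hKdef
  have hK : (a - a * a * b) ^ K = 0 := by rw [pow_succ, hk, zero_mul]
  have hba : b * a = a * b := hab.symm
  have heb : (a * b) * b = b := by rw [← hba]; exact hbab
  have hbe : b * (a * b) = b := by rw [← mul_assoc]; exact hbab
  have hee : (a * b) * (a * b) = a * b := by
    rw [mul_assoc, ← mul_assoc b a b, hbab]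
  have hae : a * (a * b) = (a * b) * a := by
    rw [mul_assoc, hba]
  have hau : a * (1 - a * b) = (1 - a * b) * a := by
    rw [mul_sub, sub_mul, mul_one, one_mul, hae]
  have hn : a - a * a * b = a * (1 - a * b) := by
    rw [mul_sub, mul_one, ← mul_assoc]
  have huu : (1 - a * b) * (1 - a * b) = 1 - a * b := by
    rw [sub_mul, one_mul, mul_sub, mul_one, hee]
    abel
  have hupow : ∀ m : ℕ, (1 - a * b) ^ (m + 1) = 1 - a * b := by
    intro m
    induction m with
    | zero => simp
    | succ n ih => rw [pow_succ, ih, huu]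
  have h0 : a ^ K * (1 - a * b) = 0 := by
    have hc : Commute a (1 - a * b) := hau
    have := hK
    rw [hn, hc.mul_pow, hKdef, hupow] at this
    exact this
  have hKe : a ^ K * (a * b) = a ^ K := by
    rw [mul_sub, mul_one, sub_eq_zero] at h0
    exact h0.symm
  have hce : Commute a (a * b) := hae
  have heK : (a * b) * a ^ K = a ^ K := by
    rw [← (hce.pow_left K).eq, hKe]
  have hcab : Commute a b := hab
  have hepow : ∀ m : ℕ, (a * b) ^ (m + 1) = a * b := by
    intro m
    induction m with
    | zero => simp
    | succ n ih => rw [pow_succ, ih, hee]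
  have heab : a ^ K * b ^ K = a * b := by
    rw [← hcab.mul_pow, hKdef, hepow]
  have heba : b ^ K * a ^ K = a * b := by
    rw [← hcab.symm.mul_pow, hba, hKdef, hepow]
  have hxaK : x * a ^ K = a ^ K * x := ((Commute.pow_right (hx : Commute x a) K)).eq
  -- (a*b)*x = (a*b)*x*(a*b)
  have t1 : (a * b) * x = b ^ K * x * a ^ K := by
    rw [← heba, mul_assoc, ← hxaK, ← mul_assoc]
  have t2 : x * (a * b) = a ^ K * x * b ^ K := by
    rw [← heab, ← mul_assoc, hxaK]
  have exe1 : (a * b) * x = ((a * b) * x) * (a * b) := by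
    calc (a * b) * x = b ^ K * x * a ^ K := t1
      _ = b ^ K * x * (a ^ K * (a * b)) := by rw [hKe]
      _ = (b ^ K * x * a ^ K) * (a * b) := by rw [← mul_assoc]
      _ = ((a * b) * x) * (a * b) := by rw [← t1]
  have exe2 : x * (a * b) = ((a * b) * x) * (a * b) := by
    calc x * (a * b) = a ^ K * x * b ^ K := t2
      _ = ((a * b) * a ^ K) * x * b ^ K := by rw [heK]
      _ = (a * b) * (a ^ K * x * b ^ K) := by simp only [mul_assoc]
      _ = (a * b) * (x * (a * b)) := by rw [← t2]
      _ = ((a * b) * x) * (a * b) := by rw [← mul_assoc]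
  have hxe : x * (a * b) = (a * b) * x := by rw [exe2, ← exe1]
  calc x * b = x * ((a * b) * b) := by rw [heb]
    _ = (x * (a * b)) * b := by rw [← mul_assoc]
    _ = ((a * b) * x) * b := by rw [hxe]
    _ = ((b * a) * x) * b := by rw [hba]
    _ = (b * (a * x)) * b := by rw [mul_assoc b a x]
    _ = (b * (x * a)) * b := by rw [hx]
    _ = ((b * x) * a) * b := by rw [← mul_assoc b x a]
    _ = (b * x) * (a * b) := by rw [mul_assoc (b * x) a b]
    _ = b * (x * (a * b)) := by rw [mul_assoc b x (a * b)]
    _ = b * ((a * b) * x) := by rw [hxe]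
    _ = (b * (a * b)) * x := by rw [← mul_assoc b (a * b) x]
    _ = b * x := by rw [hbe]

theorem stmt7 {R : Type*} [Ring R] (p q d : R) (hp : p * p = p) (hq : q * q = q)
    (hd : IsDrazinInverse (p - q) d) :
    IsDrazinInverse (p - p * q * p) (d ^ 2 * p) ∧ d ^ 2 * p = p * d ^ 2 := by
  have hp1 : ∀ x : R, p * (p * x) = p * x := fun x => by rw [← mul_assoc, hp]
  have hq1 : ∀ x : R, q * (q * x) = q * x := fun x => by rw [← mul_assoc, hq]
  have hG1 : p * ((p - q) * (p - q)) = p - p * q * p := by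
    simp only [mul_sub, sub_mul, mul_assoc, hp, hq, hp1, hq1]
    abel
  have hG2 : ((p - q) * (p - q)) * p = p - p * q * p := by
    simp only [mul_sub, sub_mul, mul_assoc, hp, hq, hp1, hq1]
    abel
  have hpa : p * ((p - q) * (p - q)) = ((p - q) * (p - q)) * p := hG1.trans hG2.symm
  have hsq : IsDrazinInverse ((p - q) * (p - q)) (d * d) := hd.sq'
  have hpd : p * (d * d) = (d * d) * p := hsq.commute' hpa
  set X := (p - q) * (p - q) with hXdef
  set D := d * d with hDdef
  have r1' : X * D = D * X := hsq.1
  have r1 : ∀ x : R, X * (D * x) = D * (X * x) := fun x => by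
    rw [← mul_assoc, r1', mul_assoc]
  have r2' : p * D = D * p := hpd
  have r2 : ∀ x : R, p * (D * x) = D * (p * x) := fun x => by
    rw [← mul_assoc, r2', mul_assoc]
  have r3' : p * X = X * p := hpa
  have r3 : ∀ x : R, p * (X * x) = X * (p * x) := fun x => by
    rw [← mul_assoc, r3', mul_assoc]
  have r5' : D * (X * D) = D := by rw [← mul_assoc]; exact hsq.2.1
  have r5 : ∀ x : R, D * (X * (D * x)) = D * x := fun x => by
    rw [← mul_assoc, ← mul_assoc, hsq.2.1]
  have r6 : ∀ x : R, D * (D * (X * x)) = D * x := fun x => by rw [← r1, r5]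
  have r6' : D * (D * X) = D := by rw [← r1', r5']
  have hd2 : d ^ 2 = D := by rw [hDdef, pow_two]
  rw [hd2, ← hG2]
  refine ⟨⟨?_, ?_, ?_⟩, ?_⟩
  · simp only [mul_assoc, r1, r1', r2, r2', r3, r3', hp1, hp]
  · simp only [mul_assoc, r1, r1', r2, r2', r3, r3', hp1, hp, r5, r5', r6, r6']
  · have key : X * p - X * p * (X * p) * (D * p) = (X - X * X * D) * p := by
      simp only [sub_mul, mul_assoc, r1, r1', r2, r2', r3, r3', hp1, hp]
    rw [key]
    obtain ⟨j, hj⟩ := hsq.2.2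
    have hcm : Commute (X - X * X * D) p := by
      show _ = _
      simp only [sub_mul, mul_sub, mul_assoc, r1, r1', r2, r2', r3, r3', hp1, hp]
    exact ⟨j, by rw [hcm.mul_pow, hj, zero_mul]⟩
  · simp only [mul_assoc, r2', r2, r1, r1', r3, r3', hp1, hp]
end

section
/- Let p, q be idempotents in a ring R with 1 − p − q Drazin invertible. Then pqp is Drazin invertible with (pqp)^D = ((1−p−q)^D)² p = p ((1−p−q)^D)². -/
private lemma comm_core {R : Type*} [Ring R] (X B y e n : R) (k : ℕ)
    (hee : e * e = e) (heB : e * B = B) (hBe : B * e = B)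
    (heX : e * X = X * e) (hXB : X * B = e) (hBX : B * X = e)
    (hne : n = X - X * e) (hk : n ^ (k + 1) = 0)
    (hy : y * X = X * y) : y * B = B * y := by
  have h1e : (1 - e) * (1 - e) = 1 - e := by
    have h : (1 - e) * (1 - e) = 1 - e - e + e * e := by noncomm_ring
    rw [h, hee]; abel
  have hcomX1e : Commute X (1 - e) := by
    show X * (1 - e) = (1 - e) * X
    rw [mul_sub, sub_mul, one_mul, mul_one, heX]
  have hX1e : X * (1 - e) = n := by rw [hne]; noncomm_ring
  have hpow1e : (1 - e) ^ (k + 1) = 1 - e := IsIdempotentElem.pow_succ_eq k h1e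
  have hXk0 : X ^ (k + 1) * (1 - e) = 0 := by
    rw [← hpow1e, ← Commute.mul_pow hcomX1e, hX1e, hk]
  have h1eXk0 : (1 - e) * X ^ (k + 1) = 0 := by
    rw [← (hcomX1e.pow_left (k + 1)).eq, hXk0]
  have hXke : X ^ (k + 1) * e = X ^ (k + 1) := by
    have h := hXk0
    rw [mul_sub, mul_one, sub_eq_zero] at h
    exact h.symm
  have heXk : e * X ^ (k + 1) = X ^ (k + 1) := by
    have h := h1eXk0
    rw [sub_mul, one_mul, sub_eq_zero] at h
    exact h.symm
  have hcXB : Commute X B := by show X * B = B * X; rw [hXB, hBX]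
  have hek : e = X ^ (k + 1) * B ^ (k + 1) := by
    rw [← Commute.mul_pow hcXB, hXB, IsIdempotentElem.pow_succ_eq k hee]
  have hek' : e = B ^ (k + 1) * X ^ (k + 1) := by
    rw [← Commute.mul_pow hcXB.symm, hBX, IsIdempotentElem.pow_succ_eq k hee]
  have hyXk : y * X ^ (k + 1) = X ^ (k + 1) * y := ((Commute.pow_right hy (k + 1)) : _)
  have hyeE : y * e = X ^ (k + 1) * y * B ^ (k + 1) := by
    rw [hek, ← mul_assoc, hyXk]
  have hyeE' : e * y = B ^ (k + 1) * y * X ^ (k + 1) := by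
    rw [hek', mul_assoc, ← hyXk, ← mul_assoc]
  have h1 : e * (X ^ (k + 1) * y * B ^ (k + 1)) = X ^ (k + 1) * y * B ^ (k + 1) := by
    rw [← mul_assoc, ← mul_assoc, heXk]
  have h2 : B ^ (k + 1) * y * X ^ (k + 1) * e = B ^ (k + 1) * y * X ^ (k + 1) := by
    rw [mul_assoc (B ^ (k + 1) * y), hXke]
  have hye : y * e = e * y := by
    calc y * e = X ^ (k + 1) * y * B ^ (k + 1) := hyeE
      _ = e * (X ^ (k + 1) * y * B ^ (k + 1)) := h1.symm
      _ = e * (y * e) := by rw [← hyeE]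
      _ = (e * y) * e := by rw [mul_assoc]
      _ = B ^ (k + 1) * y * X ^ (k + 1) * e := by rw [hyeE']
      _ = B ^ (k + 1) * y * X ^ (k + 1) := h2
      _ = e * y := hyeE'.symm
  -- the invertible part
  have hu0w : (X * e + 1 - e) * (B + 1 - e) = 1 := by
    have h : (X * e + 1 - e) * (B + 1 - e)
        = X * (e * B) + X * e - X * (e * e) + B + 1 - e - e * B - e + e * e := by noncomm_ring
    rw [h, heB, hee, hXB]; abel
  have hwu0 : (B + 1 - e) * (X * e + 1 - e) = 1 := by
    have h : (B + 1 - e) * (X * e + 1 - e)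
        = (B * X) * e + B - B * e + X * e + 1 - e - (e * X) * e - e + e * e := by noncomm_ring
    rw [h, hBX, hBe, hee, heX, mul_assoc, hee]; abel
  have hne0 : n * e = 0 := by
    have h : n * e = X * e - X * (e * e) := by rw [hne]; noncomm_ring
    rw [h, hee, sub_self]
  have hen0 : e * n = 0 := by
    have h : e * n = (e * X) - (e * X) * e := by rw [hne]; noncomm_ring
    rw [h, heX, mul_assoc, hee, sub_self]
  have hnX : n * X = X * n := by
    have hl : n * X = X * X - X * (e * X) := by rw [hne]; noncomm_ring
    have hr : X * n = X * X - X * (X * e) := by rw [hne]; noncomm_ring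
    rw [hl, hr, heX]
  have hcomnu0 : Commute n (X * e + 1 - e) := by
    show n * (X * e + 1 - e) = (X * e + 1 - e) * n
    have hl : n * (X * e + 1 - e) = (n * X) * e + n - n * e := by noncomm_ring
    have hr : (X * e + 1 - e) * n = X * (e * n) + n - e * n := by noncomm_ring
    rw [hl, hr, hnX, mul_assoc, hne0, hen0, mul_zero]
  have hu0_unit : IsUnit (X * e + 1 - e) := ⟨⟨_, _, hu0w, hwu0⟩, rfl⟩
  have hnil : IsNilpotent n := ⟨k + 1, hk⟩
  have hu_unit : IsUnit (X + 1 - e) := by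
    have h : X + 1 - e = (X * e + 1 - e) + n := by rw [hne]; noncomm_ring
    rw [h]
    exact hnil.isUnit_add_left_of_commute hu0_unit hcomnu0
  obtain ⟨U, hU⟩ := hu_unit
  have huB : (X + 1 - e) * B = e := by
    have h : (X + 1 - e) * B = X * B + B - e * B := by noncomm_ring
    rw [h, hXB, heB]; abel
  have hBu : B * (X + 1 - e) = e := by
    have h : B * (X + 1 - e) = B * X + B - B * e := by noncomm_ring
    rw [h, hBX, hBe]; abel
  have hyu : y * (X + 1 - e) = (X + 1 - e) * y := by
    have hl : y * (X + 1 - e) = y * X + y - y * e := by noncomm_ring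
    have hr : (X + 1 - e) * y = X * y + y - e * y := by noncomm_ring
    rw [hl, hr, hy, hye]
  have hCy : Commute y (U : R) := by rw [hU]; exact hyu
  have hCyi : Commute y ((U⁻¹ : Rˣ) : R) := hCy.units_inv_right
  have hB1 : B = ((U⁻¹ : Rˣ) : R) * e := by
    have h : ((U⁻¹ : Rˣ) : R) * ((U : R) * B) = ((U⁻¹ : Rˣ) : R) * e := by rw [hU, huB]
    rwa [← mul_assoc, Units.inv_mul, one_mul] at h
  calc y * B = y * (((U⁻¹ : Rˣ) : R) * e) := by rw [← hB1]
    _ = ((U⁻¹ : Rˣ) : R) * (y * e) := by rw [← mul_assoc, hCyi.eq, mul_assoc]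
    _ = ((U⁻¹ : Rˣ) : R) * (e * y) := by rw [hye]
    _ = (((U⁻¹ : Rˣ) : R) * e) * y := by rw [mul_assoc]
    _ = B * y := by rw [← hB1]

lemma drazin_commutant_s10 {R : Type*} [Ring R] {A B y : R}
    (h : IsDrazinInverse A B) (hy : y * A = A * y) : y * B = B * y := by
  obtain ⟨hc, hbab, k, hk⟩ := h
  have hee : (A * B) * (A * B) = A * B := by
    calc A * B * (A * B) = A * (B * A * B) := by noncomm_ring
      _ = A * B := by rw [hbab]
  have heB : (A * B) * B = B := by rw [hc]; exact hbab
  have hBe : B * (A * B) = B := by rw [← mul_assoc]; exact hbab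
  have heA : (A * B) * A = A * (A * B) := by
    rw [mul_assoc, ← hc, ← mul_assoc]
  have hBX : B * A = A * B := hc.symm
  have hne : A - A * A * B = A - A * (A * B) := by rw [mul_assoc]
  have hk1 : (A - A * A * B) ^ (k + 1) = 0 := by rw [pow_succ, hk, zero_mul]
  rw [hne] at hk1
  exact comm_core A B y (A * B) (A - A * (A * B)) k hee heB hBe heA rfl hBX rfl hk1 hy

private lemma main_core {R : Type*} [Ring R] (A B2 p : R) (hAB : IsDrazinInverse A B2)
    (hpp : p * p = p) (hpA : p * A = A * p) :
    IsDrazinInverse (A * p) (B2 * p) ∧ B2 * p = p * B2 := by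
  obtain ⟨hc, hbab, hnil⟩ := hAB
  have hpB : p * B2 = B2 * p := drazin_commutant_s10 ⟨hc, hbab, hnil⟩ hpA
  have mpa : ∀ x : R, p * (A * x) = A * (p * x) := fun x => by
    rw [← mul_assoc, hpA, mul_assoc]
  have mpb : ∀ x : R, p * (B2 * x) = B2 * (p * x) := fun x => by
    rw [← mul_assoc, hpB, mul_assoc]
  have mba : ∀ x : R, B2 * (A * x) = A * (B2 * x) := fun x => by
    rw [← mul_assoc, ← hc, mul_assoc]
  have mpp : ∀ x : R, p * (p * x) = p * x := fun x => by
    rw [← mul_assoc, hpp]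
  have bab : ∀ x : R, B2 * (A * (B2 * x)) = B2 * x := fun x => by
    rw [← mul_assoc, ← mul_assoc, hbab]
  have abb : ∀ x : R, A * (B2 * (B2 * x)) = B2 * x := fun x => by
    rw [← mul_assoc, ← mul_assoc, hc, hbab]
  refine ⟨⟨?_, ?_, ?_⟩, hpB.symm⟩
  · simp only [mul_assoc, mpa, mpb, mba, mpp, bab, abb, hpp]
  · simp only [mul_assoc, mpa, mpb, mba, mpp, bab, abb, hpp]
  · have key : A * p - A * p * (A * p) * (B2 * p) = (A - A * A * B2) * p := by
      have hl : A * p * (A * p) * (B2 * p) = A * (p * (A * (p * (B2 * p)))) := by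
        simp only [mul_assoc]
      have hr : (A - A * A * B2) * p = A * p - A * (A * (B2 * p)) := by noncomm_ring
      rw [hl, hr, mpa, mpp, mpb, hpp]
    rw [key]
    have hcom : Commute (A - A * A * B2) p := by
      have h1 : Commute p A := hpA
      have h2 : Commute p B2 := hpB
      exact ((h1.sub_right ((h1.mul_right h1).mul_right h2))).symm
    obtain ⟨m, hm⟩ := hnil
    exact ⟨m, by rw [hcom.mul_pow, hm, zero_mul]⟩

theorem stmt10 {R : Type*} [Ring R] (p q d : R) (hp : p * p = p) (hq : q * q = q)
    (hd : IsDrazinInverse (1 - p - q) d) :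
    IsDrazinInverse (p * q * p) (d ^ 2 * p) ∧ d ^ 2 * p = p * d ^ 2 := by
  obtain ⟨hc, hdad, hnil⟩ := hd
  set a : R := 1 - p - q with ha
  -- basic commutation facts for a, d
  have sda : ∀ x : R, d * (a * x) = a * (d * x) := fun x => by
    rw [← mul_assoc, ← hc, mul_assoc]
  have hadd' : a * d * d = d := by rw [hc]; exact hdad
  have hadd : a * (d * d) = d := by rw [← mul_assoc]; exact hadd'
  have sadd : ∀ x : R, a * (d * (d * x)) = d * x := fun x => by
    rw [← mul_assoc, ← mul_assoc, hadd']
  -- p * q * p expressed via a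
  have e1 : a * p = -(q * p) := by
    rw [ha, sub_mul, sub_mul, one_mul, hp]; abel
  have h1 : (a * a) * p = p * q * p := by
    rw [mul_assoc, e1]
    have e2 : a * -(q * p) = -(1 * (q * p)) + p * (q * p) + (q * q) * p := by
      rw [ha]; noncomm_ring
    rw [e2, hq, one_mul, ← mul_assoc]; abel
  have e3 : p * a = -(p * q) := by
    rw [ha, mul_sub, mul_sub, mul_one, hp]; abel
  have h2 : p * (a * a) = p * q * p := by
    rw [← mul_assoc, e3]
    have e4 : -(p * q) * a = -((p * q) * 1) + (p * q) * p + p * (q * q) := by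
      rw [ha]; noncomm_ring
    rw [e4, hq, mul_one]; abel
  have hpA : p * (a * a) = (a * a) * p := by rw [h1, h2]
  -- Drazin inverse of a*a is d*d
  have had : Commute a d := hc
  have hAB : IsDrazinInverse (a * a) (d * d) := by
    refine ⟨?_, ?_, ?_⟩
    · exact ((had.mul_left had).mul_right (had.mul_left had)).eq
    · simp only [mul_assoc, sda, sadd, hadd]
    · have hn2 : (a * a) - (a * a) * (a * a) * (d * d)
          = (a - a * a * d) * (a - a * a * d) := by
        have hl : (a * a) - (a * a) * (a * a) * (d * d)
            = a * a - a * (a * (a * (a * (d * d)))) := by noncomm_ring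
        have hr : (a - a * a * d) * (a - a * a * d)
            = a * a - a * (a * (d * a)) - a * (a * (a * d))
              + a * (a * (d * (a * (a * d)))) := by noncomm_ring
        rw [hl, hr]
        simp only [sda, hadd, hc.symm]
        abel
      rw [hn2]
      obtain ⟨m, hm⟩ := hnil
      refine ⟨m, ?_⟩
      rw [← pow_two, ← pow_mul, two_mul, pow_add, hm, zero_mul]
  -- apply the abstract result
  have main := main_core (a * a) (d * d) p hAB hp hpA
  have hd2 : (d : R) ^ 2 = d * d := sq d
  rw [hd2, ← h1]
  exact main
end

section
/- Let R be a ring with involution * in which a*a = 0 implies a = 0 (*-reducing), and let p, q be projectors (self-adjoint idempotents) with p − q Drazin invertible. Then (p−q)^D = p − q if and only if pq = qp. -/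
/-- A nilpotent idempotent is zero. -/
lemma nilpotent_idem_eq_zero {R : Type*} [Ring R] {x : R}
    (hn : IsNilpotent x) (hi : x * x = x) : x = 0 := by
  obtain ⟨n, hn⟩ := hn
  have hpow : ∀ k, x ^ (k + 1) = x := by
    intro k
    induction k with
    | zero => simp
    | succ m ih => rw [pow_succ, ih, hi]
  cases n with
  | zero =>
    have h1 : (1 : R) = 0 := by simpa using hn
    rw [← mul_one x, h1, mul_zero]
  | succ k => rw [hpow] at hn; exact hn

lemma aux_cancel {G : Type*} [AddCommGroup G] {x y u v : G}
    (h : x - u - (y - v) = x - y) : u = v := by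
  have h2 : x - u - (y - v) - (x - y) = 0 := sub_eq_zero.mpr h
  have h3 : v - u = 0 := by rw [← h2]; abel
  exact (sub_eq_zero.mp h3).symm

theorem stmt14 {R : Type*} [Ring R] [StarRing R]
    (hred : ∀ a : R, star a * a = 0 → a = 0)
    (p q d : R) (hp : p * p = p) (hps : star p = p)
    (hq : q * q = q) (hqs : star q = q)
    (hd : IsDrazinInverse (p - q) d) :
    d = p - q ↔ p * q = q * p := by
  obtain ⟨h1, h2, h3⟩ := hd
  -- unconditional expansion of the cube
  have hpp : ∀ x : R, p * (p * x) = p * x := fun x => by rw [← mul_assoc, hp]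
  have hqq : ∀ x : R, q * (q * x) = q * x := fun x => by rw [← mul_assoc, hq]
  have e3 : (p - q) * ((p - q) * (p - q)) = p - p * q * p - (q - q * p * q) := by
    have e2 : (p - q) * (p - q) = p * p - p * q - (q * p - q * q) := by
      rw [sub_mul, mul_sub, mul_sub]
    rw [e2, hp, hq]
    simp only [mul_sub, sub_mul, hp, hq, ← mul_assoc]
    abel
  constructor
  · intro hdeq
    subst hdeq
    -- h2 gives the cube equation
    have hcube : (p - q) * ((p - q) * (p - q)) = p - q := by
      rw [← mul_assoc]; exact h2
    have hk : p * q * p = q * p * q := aux_cancel (e3.symm.trans hcube)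
    have hk' : p * (q * p) = q * (p * q) := by
      rw [← mul_assoc, ← mul_assoc, hk]
    have hk'' : ∀ x : R, p * (q * (p * x)) = q * (p * (q * x)) := fun x => by
      rw [← mul_assoc, ← mul_assoc, hk, mul_assoc, mul_assoc]
    have hu : p * q - p * (q * p) = 0 := by
      apply hred
      have hstar : star (p * q - p * (q * p)) = q * p - p * (q * p) := by
        simp only [star_sub, star_mul, hps, hqs, mul_assoc, hk']
      rw [hstar]
      simp only [sub_mul, mul_sub, mul_assoc, hp, hq, hpp, hqq, hk', hk'']
      simp
    have hv : q * p - q * (p * q) = 0 := by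
      apply hred
      have hstar : star (q * p - q * (p * q)) = p * q - q * (p * q) := by
        simp only [star_sub, star_mul, hps, hqs, mul_assoc, hk']
      rw [hstar]
      simp only [sub_mul, mul_sub, mul_assoc, hp, hq, hpp, hqq, hk', hk'']
      simp
    have hpq : p * q = p * (q * p) := sub_eq_zero.mp hu
    have hqp : q * p = q * (p * q) := sub_eq_zero.mp hv
    calc p * q = p * (q * p) := hpq
      _ = q * p * q := by rw [← mul_assoc, hk]
      _ = q * (p * q) := by rw [mul_assoc]
      _ = q * p := hqp.symm
  · intro hcomm
    set a := p - q with ha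
    have hpqp : p * q * p = q * p := by rw [hcomm, mul_assoc, hp]
    have hqpq : q * p * q = q * p := by rw [← hcomm, mul_assoc, hq, hcomm]
    have hca : a * a * a = a := by
      rw [mul_assoc]
      rw [e3, hpqp, hqpq, ha]
      abel
    have haa : ∀ x : R, a * (a * (a * x)) = a * x := fun x => by
      rw [← mul_assoc, ← mul_assoc, hca]
    have haaa : a * (a * a) = a := by rw [← mul_assoc, hca]
    have hda : ∀ x : R, d * (a * x) = a * (d * x) := fun x => by
      rw [← mul_assoc, ← h1, mul_assoc]
    have hdad : ∀ x : R, d * (a * (d * x)) = d * x := fun x => by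
      rw [← mul_assoc, ← mul_assoc, h2]
    have hdad0 : d * (a * d) = d := by rw [← mul_assoc, h2]
    have hda0 : d * a = a * d := h1.symm
    have hdd : a * (a * (d * d)) = a * d := by
      rw [← mul_assoc a d d, h1, h2]
      exact h1
    -- x := a*a - a*d is idempotent
    have hidem : (a * a - a * d) * (a * a - a * d) = a * a - a * d := by
      simp only [sub_mul, mul_sub, mul_assoc, hda, hdad, hdad0, hda0, hdd, haa, haaa]
      abel
    -- and it is the square of the nilpotent part
    have hn2 : (a - a * a * d) * (a - a * a * d) = a * a - a * d := by
      simp only [sub_mul, mul_sub, mul_assoc, hda, hdad, hdad0, hda0, hdd, haa, haaa]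
      abel
    have hnil : IsNilpotent (a * a - a * d) := by
      obtain ⟨k, hk⟩ := h3
      refine ⟨k, ?_⟩
      have : (a * a - a * d) ^ k = ((a - a * a * d) * (a - a * a * d)) ^ k := by
        rw [hn2]
      rw [this, ← sq, ← pow_mul, two_mul, pow_add, hk, zero_mul]
    have had : a * a = a * d := sub_eq_zero.mp (nilpotent_idem_eq_zero hnil hidem)
    have hda' : d * a = a * a := by rw [← h1, ← had]
    calc d = d * a * d := h2.symm
      _ = a * a * d := by rw [hda']
      _ = a * (a * d) := by rw [mul_assoc]
      _ = a * (a * a) := by rw [← had]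
      _ = a := haaa
end

section
/- Let R be a *-reducing ring in which 6 is invertible, and let p, q be projectors with p + q Drazin invertible. Then (p+q)^D = p + q if and only if pq = qp = 0. -/
section aux
variable {R : Type*} [Ring R]

lemma aux_c6 (h6 : IsUnit (6 : R)) {x : R} (h : x+x+x+x+x+x = 0) : x = 0 := by
  obtain ⟨u, hu⟩ := h6
  have h6x : (6:R) * x = 0 := by
    rw [show (6:R)*x = x+x+x+x+x+x from by noncomm_ring, h]
  calc x = ↑u⁻¹ * (↑u * x) := (u.inv_mul_cancel_left x).symm
    _ = 0 := by rw [hu, h6x, mul_zero]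

lemma aux_c2 (h6 : IsUnit (6 : R)) {x : R} (h : x+x = 0) : x = 0 := by
  apply aux_c6 h6
  rw [show x+x+x+x+x+x = (x+x)+(x+x)+(x+x) from by abel, h]; abel

lemma aux_c3 (h6 : IsUnit (6 : R)) {x : R} (h : x+x+x = 0) : x = 0 := by
  apply aux_c6 h6
  rw [show x+x+x+x+x+x = (x+x+x)+(x+x+x) from by abel, h]; abel

end aux

theorem stmt15 {R : Type*} [Ring R] [StarRing R]
    (hred : ∀ a : R, star a * a = 0 → a = 0) (h6 : IsUnit (6 : R))
    (p q d : R) (hp : p * p = p) (hps : star p = p)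
    (hq : q * q = q) (hqs : star q = q)
    (hd : IsDrazinInverse (p + q) d) :
    d = p + q ↔ p * q = 0 ∧ q * p = 0 := by
  obtain ⟨hcomm, hdad, hnil⟩ := hd
  have hpp : ∀ x : R, p*(p*x) = p*x := fun x => by rw [← mul_assoc, hp]
  have hqq : ∀ x : R, q*(q*x) = q*x := fun x => by rw [← mul_assoc, hq]
  constructor
  · -- d = p + q → pq = qp = 0
    intro hde
    subst hde
    -- hdad : (p+q)*(p+q)*(p+q) = p+q
    have key : p*q + q*p + (p*q + q*p) + p*(q*p) + q*(p*q) = 0 := by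
      have e : (p+q)*(p+q)*(p+q)
          = p + q + (p*q + q*p + (p*q + q*p) + p*(q*p) + q*(p*q)) := by
        simp only [mul_add, add_mul, mul_assoc, hpp, hqq, hp, hq]
        abel
      have h2 : p + q + (p*q + q*p + (p*q + q*p) + p*(q*p) + q*(p*q)) = p + q + 0 := by
        rw [← e, hdad, add_zero]
      exact add_left_cancel h2
    -- A : left multiply key by p
    have A : p*q + p*(q*p) + (p*q + p*(q*p)) + p*(q*p) + p*(q*(p*q)) = 0 := by
      have : p*q + p*(q*p) + (p*q + p*(q*p)) + p*(q*p) + p*(q*(p*q))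
          = p * (p*q + q*p + (p*q + q*p) + p*(q*p) + q*(p*q)) := by
        simp only [mul_add, hpp]
      rw [this, key, mul_zero]
    -- Aq : right multiply A by q
    have Aq : p*q + p*(q*(p*q)) + (p*q + p*(q*(p*q))) + p*(q*(p*q)) + p*(q*(p*q)) = 0 := by
      have : p*q + p*(q*(p*q)) + (p*q + p*(q*(p*q))) + p*(q*(p*q)) + p*(q*(p*q))
          = (p*q + p*(q*p) + (p*q + p*(q*p)) + p*(q*p) + p*(q*(p*q))) * q := by
        simp only [add_mul, mul_assoc, hq]
      rw [this, A, zero_mul]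
    -- 3*(pqp) = 3*(pqpq) hence pqp = pqpq
    have h34 : p*(q*p) = p*(q*(p*q)) := by
      have hsub : (p*(q*p) - p*(q*(p*q))) + (p*(q*p) - p*(q*(p*q))) + (p*(q*p) - p*(q*(p*q)))
          = (p*q + p*(q*p) + (p*q + p*(q*p)) + p*(q*p) + p*(q*(p*q)))
            - (p*q + p*(q*(p*q)) + (p*q + p*(q*(p*q))) + p*(q*(p*q)) + p*(q*(p*q))) := by
        abel
      rw [A, Aq, sub_zero] at hsub
      have := aux_c3 h6 hsub
      exact sub_eq_zero.mp this
    -- from A with w4 = w3 : 2*(pq + 2 pqp) = 0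
    have hpq2 : p*q + (p*(q*p) + p*(q*p)) = 0 := by
      apply aux_c2 h6
      rw [show (p*q + (p*(q*p) + p*(q*p))) + (p*q + (p*(q*p) + p*(q*p)))
          = p*q + p*(q*p) + (p*q + p*(q*p)) + p*(q*p) + p*(q*p) from by abel]
      rw [← h34] at A
      -- A now : p*q + p*(q*p) + (p*q + p*(q*p)) + p*(q*p) + p*(q*p) = 0
      exact A
    -- star of hpq2 : qp + 2 pqp = 0
    have hqp2 : q*p + (p*(q*p) + p*(q*p)) = 0 := by
      have := congrArg star hpq2
      simpa [star_add, star_mul, hps, hqs, mul_assoc] using this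
    -- qpq = (qp)*q = -(2pqp)*q and pqp*q = pqpq = pqp
    have hqpq : q*(p*q) + (p*(q*p) + p*(q*p)) = 0 := by
      have h1 : (q*p + (p*(q*p) + p*(q*p))) * q = 0 := by rw [hqp2, zero_mul]
      have h2 : (q*p + (p*(q*p) + p*(q*p))) * q
          = q*(p*q) + (p*(q*(p*q)) + p*(q*(p*q))) := by
        simp only [add_mul, mul_assoc]
      rw [h2, ← h34] at h1
      exact h1
    -- substitute into key : -9 pqp = 0
    have h9 : p*(q*p) = 0 := by
      set t := p*(q*p) with ht
      have hpqv : p*q = -(t + t) := by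
        have h := hpq2; rwa [add_eq_zero_iff_eq_neg] at h
      have hqpv : q*p = -(t + t) := by
        have h := hqp2; rwa [add_eq_zero_iff_eq_neg] at h
      have hqpqv : q*(p*q) = -(t + t) := by
        have h := hqpq; rwa [add_eq_zero_iff_eq_neg] at h
      have hs : (t+t+t) + (t+t+t) + (t+t+t)
          = -(p*q + q*p + (p*q + q*p) + t + q*(p*q)) := by
        rw [hqpqv, hpqv, hqpv]; abel
      rw [key, neg_zero] at hs
      exact aux_c3 h6 (aux_c3 h6 hs)
    constructor
    · have h := hpq2; rw [h9, add_zero, add_zero] at h; exact h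
    · have h := hqp2; rw [h9, add_zero, add_zero] at h; exact h
  · rintro ⟨hpq0, hqp0⟩
    set a := p + q with ha'
    have ha : a * a = a := by
      rw [ha', add_mul, mul_add, mul_add, hp, hq, hpq0, hqp0, add_zero, zero_add]
    set x := a - a * d with hx'
    have hnil' : IsNilpotent x := by
      have : a - a * a * d = x := by rw [ha]
      rwa [this] at hnil
    have hxx : x * x = x := by
      have h1 : (a*d)*a = a*d := by rw [mul_assoc, ← hcomm, ← mul_assoc, ha]
      have h2 : (a*d)*(a*d) = a*d := by
        rw [mul_assoc, ← mul_assoc d a d, hdad]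
      have h3 : a*(a*d) = a*d := by rw [← mul_assoc, ha]
      rw [hx', sub_mul, mul_sub, mul_sub, ha, h1, h2, h3]
      abel
    have hx0 : x = 0 := by
      obtain ⟨n, hn⟩ := hnil'
      have hpow : ∀ m : ℕ, x ^ (m+1) = x := by
        intro m
        induction m with
        | zero => simp
        | succ k ih => rw [pow_succ, ih, hxx]
      cases n with
      | zero =>
        have h1 : (1:R) = 0 := by simpa using hn
        calc x = x * 1 := (mul_one x).symm
          _ = 0 := by rw [h1, mul_zero]
      | succ k => rw [hpow k] at hn; exact hn
    have had : a * d = a := by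
      have := sub_eq_zero.mp hx0
      exact this.symm
    calc d = d * a * d := hdad.symm
      _ = d * (a * d) := by rw [mul_assoc]
      _ = d * a := by rw [had]
      _ = a * d := hcomm.symm
      _ = a := had
end

section
/- Let p, q be idempotents in a ring R with p − q Drazin invertible and (p+q)(p−q)^π nilpotent. Then (p−q)^D = F + G − H, where F = p(p−q)^D, G = (p−q)^D p, H = (p−q)^D(p−q). -/
/-- Double commutant property: if `x` commutes with `b` and `c` is a Drazin inverse
of `b`, then `x` commutes with `c`. -/
lemma drazin_double_commute {R : Type*} [Ring R] (b c x : R)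
    (hbc : b * c = c * b) (h2 : c * b * c = c)
    (h3 : IsNilpotent (b - b * (b * c))) (hx : x * b = b * x) :
    x * c = c * x := by
  obtain ⟨k, hk⟩ := h3
  rcases k with _ | k
  · have h0 : (0 : R) = 1 := by simpa using hk.symm
    have := subsingleton_of_zero_eq_one h0
    exact Subsingleton.elim _ _
  obtain ⟨e, he'⟩ : ∃ y, y = b * c := ⟨_, rfl⟩
  obtain ⟨m, hm'⟩ : ∃ y, y = b * e := ⟨_, rfl⟩
  obtain ⟨n, hn'⟩ : ∃ y, y = b - m := ⟨_, rfl⟩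
  rw [← he', ← hm', ← hn'] at hk
  have hcb : c * b = b * c := hbc.symm
  have hce : c * e = c := by rw [he', ← mul_assoc]; exact h2
  have hec : e * c = c := by rw [he', hbc]; exact h2
  have hee : e * e = e := by rw [he', mul_assoc, ← mul_assoc c b c, h2]
  have hbe : b * e = e * b := by rw [he', mul_assoc, hcb]
  have hme : m * e = m := by rw [hm', mul_assoc, hee]
  have hem : e * m = m := by rw [hm', ← mul_assoc, ← hbe, mul_assoc, hee]
  have hmc : m * c = e := by rw [hm', mul_assoc, hec, ← he']
  have hcm : c * m = e := by rw [hm', ← mul_assoc, hcb, ← he', hee]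
  have hcn : c * n = 0 := by rw [hn', mul_sub, hcm, hcb, ← he', sub_self]
  have hnc : n * c = 0 := by rw [hn', sub_mul, hmc, ← he', sub_self]
  have hmb : m * b = b * m := by rw [hm', mul_assoc, ← hbe, ← mul_assoc]
  have hnb : n * b = b * n := by rw [hn', sub_mul, mul_sub, hmb]
  have hen : e * n = 0 := by rw [he', mul_assoc, hcn, mul_zero]
  have hne : n * e = 0 := by rw [he', ← mul_assoc, hnb, mul_assoc, hnc, mul_zero]
  have hmn : m * n = 0 := by rw [hm', mul_assoc, hen, mul_zero]
  have hnm : n * m = 0 := by rw [hm', ← mul_assoc, hnb, mul_assoc, hne, mul_zero]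
  have hbm : b = n + m := by rw [hn']; abel
  have hpow : ∀ j : ℕ, b ^ (j + 1) = n ^ (j + 1) + m ^ (j + 1) := by
    intro j
    induction j with
    | zero => simpa using hbm
    | succ j ih =>
        rw [pow_succ, ih, hbm, add_mul, mul_add, mul_add]
        have e1 : n ^ (j + 1) * m = 0 := by rw [pow_succ, mul_assoc, hnm, mul_zero]
        have e2 : m ^ (j + 1) * n = 0 := by rw [pow_succ, mul_assoc, hmn, mul_zero]
        rw [e1, e2, ← pow_succ, ← pow_succ]
        abel
  have hbK : b ^ (k + 1) = m ^ (k + 1) := by rw [hpow k, hk, zero_add]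
  have hbKe : b ^ (k + 1) * e = b ^ (k + 1) := by
    rw [hbK, pow_succ, mul_assoc, hme]
  have heid : ∀ j : ℕ, e ^ (j + 1) = e := by
    intro j
    induction j with
    | zero => simp
    | succ j ih => rw [pow_succ, ih, hee]
  have hcommbc : Commute b c := hbc
  have heKb : e = b ^ (k + 1) * c ^ (k + 1) := by
    rw [← hcommbc.mul_pow, ← he', heid]
  have heKc : e = c ^ (k + 1) * b ^ (k + 1) := by
    rw [← hcommbc.symm.mul_pow, hcb, ← he', heid]
  have hxcomm : Commute x b := hx
  have hxbK : x * b ^ (k + 1) = b ^ (k + 1) * x := (hxcomm.pow_right (k + 1)).eq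
  have hebK : e * b ^ (k + 1) = b ^ (k + 1) := by
    have : Commute e (b ^ (k + 1)) := (Commute.symm hbe).pow_right (k + 1)
    rw [this.eq, hbKe]
  have h1e : x * e = b ^ (k + 1) * (x * c ^ (k + 1)) := by
    rw [heKb, ← mul_assoc, hxbK, mul_assoc]
  have h2e : e * x = c ^ (k + 1) * (x * b ^ (k + 1)) := by
    rw [heKc, mul_assoc, ← hxbK]
  have hexe1 : (e * x) * e = e * x := by
    rw [h2e, mul_assoc, mul_assoc, hbKe]
  have hexe2 : e * (x * e) = x * e := by
    rw [h1e, ← mul_assoc, hebK]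
  have hxe : x * e = e * x := by
    calc x * e = e * (x * e) := hexe2.symm
      _ = (e * x) * e := by rw [mul_assoc]
      _ = e * x := hexe1
  have l1 : m * (x * e) = (b * x) * e := by
    rw [hm', mul_assoc, hexe2, ← mul_assoc]
  have l2 : (x * e) * m = (b * x) * e := by
    have hebe : e * (b * e) = b * e := by rw [← mul_assoc, ← hbe, mul_assoc, hee]
    rw [hm', mul_assoc x e (b * e), hebe, ← mul_assoc, hx]
  have key : c * (x * e) = (x * e) * c := by
    calc c * (x * e) = c * ((x * e) * e) := by rw [mul_assoc x e e, hee]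
      _ = c * ((x * e) * (m * c)) := by rw [hmc]
      _ = c * (((x * e) * m) * c) := by rw [mul_assoc (x * e) m c]
      _ = c * ((m * (x * e)) * c) := by rw [l2, ← l1]
      _ = (c * m) * ((x * e) * c) := by rw [mul_assoc m (x * e) c, ← mul_assoc c m _]
      _ = e * ((x * e) * c) := by rw [hcm]
      _ = (e * (x * e)) * c := (mul_assoc e (x * e) c).symm
      _ = (x * e) * c := by rw [hexe2]
  calc x * c = (x * e) * c := by rw [mul_assoc, hec]
    _ = c * (x * e) := key.symm
    _ = c * x := by rw [hxe, ← mul_assoc, hce]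

/-- If `d` is a Drazin inverse of `a` and `q` commutes with `a * a`, then `q`
commutes with `d * d`. -/
lemma drazin_key {R : Type*} [Ring R] (a d q : R)
    (hda : a * d = d * a) (hdad : d * a * d = d)
    (hnil : IsNilpotent (a - a * a * d))
    (hx : q * (a * a) = (a * a) * q) :
    q * (d * d) = (d * d) * q := by
  have hswap : ∀ y : R, d * (a * y) = a * (d * y) := fun y => by
    rw [← mul_assoc, ← hda, mul_assoc]
  have hda' : d * a = a * d := hda.symm
  have collapse : ∀ y : R, d * (a * (d * y)) = d * y := fun y => by
    rw [← mul_assoc, ← mul_assoc, hdad]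
  have hdad' : d * (a * d) = d := by rw [← mul_assoc, hdad]
  have C : Commute a d := hda
  have hC1 : Commute a (d * d) := C.mul_right C
  have hbc : (a * a) * (d * d) = (d * d) * (a * a) := (hC1.mul_left hC1).eq
  have hh2 : (d * d) * (a * a) * (d * d) = d * d := by
    simp only [mul_assoc]
    rw [hswap, collapse, collapse]
  have h4 : a * (a * (a * (a * (d * d)))) = a * (a * (a * d)) := by
    rw [← hswap d, hdad']
  have hh3 : IsNilpotent ((a * a) - (a * a) * ((a * a) * (d * d))) := by
    obtain ⟨j, hj⟩ := hnil
    refine ⟨j, ?_⟩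
    have eqn : (a * a) - (a * a) * ((a * a) * (d * d))
        = (a - a * a * d) * (a - a * a * d) := by
      simp only [mul_sub, sub_mul, mul_assoc, hswap, hda']
      rw [h4]
      abel
    rw [eqn, (Commute.refl _).mul_pow, hj, mul_zero]
  exact drazin_double_commute _ _ _ hbc hh2 hh3 hx

theorem stmt17 {R : Type*} [Ring R] (p q d : R) (hp : p * p = p) (hq : q * q = q)
    (hd : IsDrazinInverse (p - q) d)
    (hn : IsNilpotent ((p + q) * (1 - (p - q) * d))) :
    d = p * d + d * p - d * (p - q) := by
  obtain ⟨hda, hdad, hnil⟩ := hd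
  have hqq : ∀ y : R, q * (q * y) = q * y := fun y => by rw [← mul_assoc, hq]
  have haa : (p - q) * (p - q) = p + q - p * q - q * p := by
    rw [mul_sub, sub_mul, sub_mul, hp, hq]; abel
  have hx : q * ((p - q) * (p - q)) = ((p - q) * (p - q)) * q := by
    rw [haa]
    simp only [mul_add, add_mul, mul_sub, sub_mul, mul_assoc, hq, hqq]
    abel
  have hqd : q * (d * d) = (d * d) * q := drazin_key (p - q) d q hda hdad hnil hx
  have had2 : (p - q) * (d * d) = d := by rw [← mul_assoc, hda, hdad]
  have hsplit : (p - q) = p * (p - q) + (p - q) * q := by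
    rw [mul_sub, sub_mul, hp, hq]; abel
  have final : d = p * d + d * q := by
    conv_lhs => rw [← had2]
    rw [hsplit, add_mul, mul_assoc, mul_assoc, had2, hqd, ← mul_assoc, had2]
  have rearr : p * d + d * p - d * (p - q) = p * d + d * q := by
    rw [mul_sub]; abel
  rw [rearr]; exact final
end

section
/- Let p, q be idempotents in a ring R with p − q invertible. Then p + q is invertible, and with F = p(p−q)⁻¹ and G = (p−q)⁻¹p, one has (p−q)⁻¹ = F + G − 1 and (p+q)⁻¹ = (2G − 1)(F + G − 1). -/
theorem stmt19 {R : Type*} [Ring R] (p q : R) (hp : p * p = p) (hq : q * q = q)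
    [Invertible (p - q)] :
    IsUnit (p + q) ∧ ⅟(p - q) = p * ⅟(p - q) + ⅟(p - q) * p - 1 ∧
      ∃ e : R, (p + q) * e = 1 ∧ e * (p + q) = 1 ∧
        e = (2 * (⅟(p - q) * p) - 1) * (p * ⅟(p - q) + ⅟(p - q) * p - 1) := by
  set u := ⅟(p - q) with hu
  have hdu : (p - q) * u = 1 := mul_invOf_self _
  have hud : u * (p - q) = 1 := invOf_mul_self _
  have e1 : u * (p - p * q) = 1 - q := by
    have h : (p - q) * (1 - q) = p - p * q := by
      have h' : (p - q) * (1 - q) = p - p * q - q + q * q := by noncomm_ring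
      rw [h', hq]; noncomm_ring
    calc u * (p - p * q) = u * ((p - q) * (1 - q)) := by rw [h]
    _ = (u * (p - q)) * (1 - q) := by rw [mul_assoc]
    _ = 1 - q := by rw [hud, one_mul]
  have e2 : (p - q * p) * u = 1 - q := by
    have h : (1 - q) * (p - q) = p - q * p := by
      have h' : (1 - q) * (p - q) = p - q * p - q + q * q := by noncomm_ring
      rw [h', hq]; noncomm_ring
    calc (p - q * p) * u = ((1 - q) * (p - q)) * u := by rw [h]
    _ = (1 - q) * ((p - q) * u) := by rw [mul_assoc]
    _ = 1 - q := by rw [hdu, mul_one]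
  have h1 : u * p = (1 - q) * u := by
    calc u * p = u * p * ((p - q) * u) := by rw [hdu, mul_one]
    _ = u * (p * (p - q)) * u := by noncomm_ring
    _ = u * (p - p * q) * u := by rw [mul_sub, hp]
    _ = (1 - q) * u := by rw [e1]
  have h2 : p * u = u * (1 - q) := by
    calc p * u = (u * (p - q)) * (p * u) := by rw [hud, one_mul]
    _ = u * ((p - q) * p * u) := by noncomm_ring
    _ = u * ((p - q * p) * u) := by rw [sub_mul, hp]
    _ = u * (1 - q) := by rw [e2]
  have hinv : (p - q) * (p * u + u * p - 1) = 1 := by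
    calc (p - q) * (p * u + u * p - 1)
        = ((p - q) * p) * u + ((p - q) * u) * p - (p - q) := by noncomm_ring
    _ = (p - q * p) * u + ((p - q) * u) * p - (p - q) := by rw [sub_mul, hp]
    _ = (1 - q) + 1 * p - (p - q) := by rw [e2, hdu]
    _ = 1 := by noncomm_ring
  have heq : p * u + u * p - 1 = u := (invOf_eq_right_inv hinv).symm
  have hq0 : q * (u * p) = 0 := by
    rw [h1]
    calc q * ((1 - q) * u) = (q - q * q) * u := by noncomm_ring
    _ = 0 := by rw [hq]; noncomm_ring
  have hpup : p * (u * p) * u = p * u := by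
    calc p * (u * p) * u = (p * u) * p * u := by noncomm_ring
    _ = (u * (1 - q)) * p * u := by rw [h2]
    _ = u * ((p - q * p) * u) := by noncomm_ring
    _ = u * (1 - q) := by rw [e2]
    _ = p * u := h2.symm
  have hL : (p + q) * ((2 * (u * p) - 1) * u) = 1 := by
    calc (p + q) * ((2 * (u * p) - 1) * u)
        = 2 * (p * (u * p) * u) + 2 * (q * (u * p)) * u - (p * u + q * u) := by noncomm_ring
    _ = 2 * (p * u) + 2 * (0 : R) * u - (p * u + q * u) := by rw [hpup, hq0]
    _ = (p - q) * u := by noncomm_ring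
    _ = 1 := hdu
  have h3 : (1 - q) * (p - q) = p - q * p := by
    have h' : (1 - q) * (p - q) = p - q * p - q + q * q := by noncomm_ring
    rw [h', hq]; noncomm_ring
  have h4 : (1 - q) * (p + q) = p - q * p := by
    have h' : (1 - q) * (p + q) = p - q * p + q - q * q := by noncomm_ring
    rw [h', hq]; noncomm_ring
  have hupu : (u * p) * (u * (p + q)) = u * p := by
    calc (u * p) * (u * (p + q)) = u * ((p * u) * (p + q)) := by noncomm_ring
    _ = u * ((u * (1 - q)) * (p + q)) := by rw [h2]
    _ = u * (u * ((1 - q) * (p + q))) := by rw [mul_assoc]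
    _ = u * (u * (p - q * p)) := by rw [h4]
    _ = u * (u * ((1 - q) * (p - q))) := by rw [h3]
    _ = u * ((u * (1 - q)) * (p - q)) := by rw [mul_assoc]
    _ = u * ((p * u) * (p - q)) := by rw [h2]
    _ = (u * p) * (u * (p - q)) := by noncomm_ring
    _ = u * p := by rw [hud, mul_one]
  have hR : ((2 * (u * p) - 1) * u) * (p + q) = 1 := by
    calc ((2 * (u * p) - 1) * u) * (p + q)
        = 2 * ((u * p) * (u * (p + q))) - u * (p + q) := by noncomm_ring
    _ = 2 * (u * p) - u * (p + q) := by rw [hupu]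
    _ = u * (p - q) := by noncomm_ring
    _ = 1 := hud
  exact ⟨⟨⟨p + q, (2 * (u * p) - 1) * u, hL, hR⟩, rfl⟩, heq.symm,
    (2 * (u * p) - 1) * u, hL, hR, by rw [heq]⟩
end
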